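/- arXiv:1411.5659 — 5 statements merged into one kernel-verified Lean document; each statement's English description precedes it below -/
import Mathlib

section
/- There exists a constant C > 0 such that for every t ∈ ℝ, every j ∈ ℤ, and every sequence φ ∈ ℓ¹(ℤ; ℂ), the discrete Schrödinger evolution u(t,j) := Σ_{k∈ℤ} K_t(j-k) φ(k) satisfies sup_{j∈ℤ} |u(t,j)| ≤ C (1+|t|)^{-1/3} Σ_{k∈ℤ} |φ(k)|. -/
/-!
Up to a unimodular factor, `K_t(j)` is `(2π)⁻¹ ∫_{-π}^{π} e^{i(jξ + 2t cos ξ)} dξ`. The second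
derivative of this phase is `-2t cos ξ`, so outside the `r`-neighbourhoods of `±π/2` it has size
at least `|t| r`, and van der Corput's second derivative test bounds the integral over those
pieces by `O((|t| r)^{-1/2})`, while the neighbourhoods contribute `O(r)`. The choice
`r = (1 + |t|)^{-1/3}` balances the two, so `|K_t(j)| ≲ (1 + |t|)^{-1/3}` uniformly in `j`, and the
`ℓ¹ → ℓ∞` bound follows from the triangle inequality for the convolution.
-/

open Real MeasureTheory

/-- The discrete Schrödinger kernel
`K t j = (1/(2π)) ∫_{-π}^{π} e^{-4 i t sin²(ξ/2)} e^{i j ξ} dξ`. -/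
noncomputable def schrodingerKernel (t : ℝ) (j : ℤ) : ℂ :=
  (1 / (2 * Real.pi)) * ∫ ξ in (-Real.pi)..Real.pi,
    Complex.exp (-4 * Complex.I * (t : ℂ) * ((Real.sin (ξ / 2) : ℂ)) ^ 2) *
      Complex.exp (Complex.I * (j : ℂ) * (ξ : ℂ))

open Set intervalIntegral
open Complex (I)
open scoped Complex

section OscillatoryIntegral

open Complex

variable {f f' f'' : ℝ → ℝ} {a b : ℝ}

theorem intervalIntegrable_cexp_I_mul (hf : ContinuousOn f (uIcc a b)) :
    IntervalIntegrable (fun x => cexp (I * f x)) volume a b :=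
  ((continuousOn_const.mul (continuous_ofReal.comp_continuousOn hf)).cexp).intervalIntegrable

theorem norm_integral_cexp_I_mul_le (hab : a ≤ b) :
    ‖∫ x in a..b, cexp (I * f x)‖ ≤ b - a := by
  simpa [abs_of_nonneg (sub_nonneg.2 hab)] using
    norm_integral_le_of_norm_le_const (a := a) (b := b) (C := 1)
      (f := fun x => cexp (I * f x)) fun x _ => (norm_exp_I_mul_ofReal (f x)).le

theorem norm_integral_cexp_I_mul_neg :
    ‖∫ x in a..b, cexp (I * ↑(-f x))‖ = ‖∫ x in a..b, cexp (I * f x)‖ := by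
  have hconj : ∀ x, cexp (I * ↑(-f x)) = (starRingEnd ℂ) (cexp (I * f x)) := fun x => by
    rw [← exp_conj, map_mul, conj_I, conj_ofReal, ofReal_neg, mul_neg, neg_mul]
  simp_rw [hconj, intervalIntegral_conj, RCLike.norm_conj]

/-- First derivative test of van der Corput. -/
theorem norm_integral_cexp_I_mul_le_of_le_deriv {μ : ℝ} (hab : a ≤ b) (hμ : 0 < μ)
    (hf : ∀ x ∈ Icc a b, HasDerivAt f (f' x) x) (hf' : ∀ x ∈ Icc a b, HasDerivAt f' (f'' x) x)
    (hf''c : ContinuousOn f'' (Icc a b)) (hf''0 : ∀ x ∈ Icc a b, 0 ≤ f'' x)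
    (hμf' : ∀ x ∈ Icc a b, μ ≤ f' x) :
    ‖∫ x in a..b, cexp (I * f x)‖ ≤ 2 / μ := by
  rw [← uIcc_of_le hab] at hf hf' hf''c hf''0 hμf'
  have hpos : ∀ x ∈ uIcc a b, 0 < f' x := fun x hx => hμ.trans_le (hμf' x hx)
  have hf'c : ContinuousOn f' (uIcc a b) := fun x hx => (hf' x hx).continuousAt.continuousWithinAt
  have hfc : ContinuousOn f (uIcc a b) := fun x hx => (hf x hx).continuousAt.continuousWithinAt
  -- integrate by parts, writing `e^{if} = (1 / f') · (-i e^{if})'`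
  have hinv : ∀ x ∈ uIcc a b, HasDerivAt (fun y => (f' y)⁻¹) (-(f'' x) / f' x ^ 2) x :=
    fun x hx => (hf' x hx).inv (hpos x hx).ne'
  have hu : ∀ x ∈ uIcc a b, HasDerivAt (fun y => ((f' y)⁻¹ : ℂ)) (↑(-(f'' x) / f' x ^ 2)) x :=
    fun x hx => by simpa using (hinv x hx).ofReal_comp
  have hv : ∀ x ∈ uIcc a b,
      HasDerivAt (fun y => -I * cexp (I * f y)) (f' x * cexp (I * f x)) x := fun x hx => by
    refine ((((hf x hx).ofReal_comp.const_mul I).cexp).const_mul (-I)).congr_deriv ?_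
    linear_combination (-(f' x * cexp (I * f x))) * I_sq
  have hu'int : IntervalIntegrable (fun x => ((-(f'' x) / f' x ^ 2 : ℝ) : ℂ)) volume a b :=
    (continuous_ofReal.comp_continuousOn (hf''c.neg.div (hf'c.pow 2)
      fun x hx => pow_ne_zero 2 (hpos x hx).ne')).intervalIntegrable
  have hv'int : IntervalIntegrable (fun x => (f' x : ℂ) * cexp (I * f x)) volume a b :=
    ((continuous_ofReal.comp_continuousOn hf'c).mul
      (continuousOn_const.mul (continuous_ofReal.comp_continuousOn hfc)).cexp).intervalIntegrable
  have hparts := integral_mul_deriv_eq_deriv_mul hu hv hu'int hv'int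
  have hlhs : ∫ x in a..b, cexp (I * f x) = ∫ x in a..b, ((f' x)⁻¹ : ℂ) * (f' x * cexp (I * f x)) :=
    integral_congr fun x hx => by
      rw [← mul_assoc, inv_mul_cancel₀ (ofReal_ne_zero.2 (hpos x hx).ne'), one_mul]
  have hbdry : ∀ x ∈ uIcc a b, ‖((f' x)⁻¹ : ℂ) * (-I * cexp (I * f x))‖ = (f' x)⁻¹ := fun x hx => by
    rw [norm_mul, norm_mul, norm_neg, norm_I, norm_exp_I_mul_ofReal, norm_inv, norm_real,
      Real.norm_of_nonneg (hpos x hx).le, one_mul, mul_one]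
  -- the remainder is bounded by the total variation of `1 / f'`
  have hrem : ‖∫ x in a..b, ((-(f'' x) / f' x ^ 2 : ℝ) : ℂ) * (-I * cexp (I * f x))‖ ≤
      (f' a)⁻¹ - (f' b)⁻¹ := by
    have hint : IntervalIntegrable (fun x => f'' x / f' x ^ 2) volume a b :=
      (hf''c.div (hf'c.pow 2) fun x hx => pow_ne_zero 2 (hpos x hx).ne').intervalIntegrable
    have hftc : ∫ x in a..b, f'' x / f' x ^ 2 = (f' a)⁻¹ - (f' b)⁻¹ := by
      rw [integral_eq_sub_of_hasDerivAt (f := fun x => -(f' x)⁻¹)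
        (fun x hx => (hinv x hx).neg.congr_deriv (by ring)) hint]
      ring
    refine (norm_integral_le_of_norm_le hab (ae_of_all _ fun x hx => ?_) hint).trans
      hftc.le
    have hx : x ∈ uIcc a b := uIcc_of_le hab ▸ Ioc_subset_Icc_self hx
    rw [norm_mul, norm_mul, norm_neg, norm_I, norm_exp_I_mul_ofReal, norm_real, Real.norm_eq_abs,
      neg_div, abs_neg, abs_of_nonneg (div_nonneg (hf''0 x hx) (sq_nonneg _)), one_mul, mul_one]
  have ha : a ∈ uIcc a b := left_mem_uIcc
  have hb : b ∈ uIcc a b := right_mem_uIcc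
  calc ‖∫ x in a..b, cexp (I * f x)‖
      ≤ (f' b)⁻¹ + (f' a)⁻¹ + ((f' a)⁻¹ - (f' b)⁻¹) := by
        rw [hlhs, hparts]
        refine (norm_sub_le _ _).trans (add_le_add ((norm_sub_le _ _).trans_eq ?_) hrem)
        rw [hbdry a ha, hbdry b hb]
    _ = 2 / f' a := by ring
    _ ≤ 2 / μ := div_le_div_of_nonneg_left zero_le_two hμ (hμf' a ha)

theorem norm_integral_cexp_I_mul_le_of_le_deriv2_of_deriv_nonneg {κ : ℝ} (hab : a ≤ b)
    (hκ : 0 < κ) (hf : ∀ x ∈ Icc a b, HasDerivAt f (f' x) x)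
    (hf' : ∀ x ∈ Icc a b, HasDerivAt f' (f'' x) x) (hf''c : ContinuousOn f'' (Icc a b))
    (hκf'' : ∀ x ∈ Icc a b, κ ≤ f'' x) (ha : 0 ≤ f' a) :
    ‖∫ x in a..b, cexp (I * f x)‖ ≤ 3 / √κ := by
  have hsκ : 0 < √κ := Real.sqrt_pos.2 hκ
  set δ := 2 / √κ with hδ
  have hδpos : 0 < δ := by positivity
  have hδ3 : δ ≤ 3 / √κ := div_le_div_of_nonneg_right (by norm_num) hsκ.le
  rcases le_or_gt b (a + δ) with hshort | hlong
  · exact (norm_integral_cexp_I_mul_le hab).trans (by linarith)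
  have hsub : Icc (a + δ) b ⊆ Icc a b := Icc_subset_Icc (by linarith) le_rfl
  have hgrowth : ∀ x ∈ Icc a b, κ * (x - a) ≤ f' x - f' a := fun x hx =>
    (convex_Icc a b).mul_sub_le_image_sub_of_le_deriv
      (fun x hx => (hf' x hx).continuousAt.continuousWithinAt)
      (fun x hx => (hf' x (interior_subset hx)).differentiableAt.differentiableWithinAt)
      (fun x hx => (hf' x (interior_subset hx)).deriv ▸ hκf'' x (interior_subset hx))
      a (left_mem_Icc.2 hab) x hx hx.1
  have hfc : ContinuousOn f (uIcc a b) := fun x hx =>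
    (hf x (uIcc_of_le hab ▸ hx)).continuousAt.continuousWithinAt
  have hint : ∀ c ∈ uIcc a b, ∀ d ∈ uIcc a b,
      IntervalIntegrable (fun x => cexp (I * f x)) volume c d :=
    fun c hc d hd => intervalIntegrable_cexp_I_mul (hfc.mono (uIcc_subset_uIcc hc hd))
  have hmem : a + δ ∈ uIcc a b := uIcc_of_le hab ▸ ⟨by linarith, hlong.le⟩
  rw [← integral_add_adjacent_intervals (hint a left_mem_uIcc _ hmem)
    (hint _ hmem b right_mem_uIcc)]
  -- away from `a`, the phase derivative is at least `κ δ = 2 √κ`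
  have htail : ‖∫ x in (a + δ)..b, cexp (I * f x)‖ ≤ 2 / (2 * √κ) := by
    refine norm_integral_cexp_I_mul_le_of_le_deriv hlong.le (by positivity)
      (fun x hx => hf x (hsub hx)) (fun x hx => hf' x (hsub hx)) (hf''c.mono hsub)
      (fun x hx => hκ.le.trans (hκf'' x (hsub hx))) fun x hx => ?_
    have h := hgrowth x (hsub hx)
    have hκδ : κ * δ = 2 * √κ := by
      rw [hδ, mul_div_assoc', div_eq_iff hsκ.ne', mul_assoc, Real.mul_self_sqrt hκ.le, mul_comm]
    nlinarith [hx.1]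
  calc _ ≤ δ + 2 / (2 * √κ) :=
        (norm_add_le _ _).trans (add_le_add ((norm_integral_cexp_I_mul_le (by linarith)).trans
          (by linarith)) htail)
    _ = 3 / √κ := by rw [hδ]; field_simp; norm_num

theorem norm_integral_cexp_I_mul_le_of_le_deriv2_of_deriv_nonpos {κ : ℝ} (hab : a ≤ b)
    (hκ : 0 < κ) (hf : ∀ x ∈ Icc a b, HasDerivAt f (f' x) x)
    (hf' : ∀ x ∈ Icc a b, HasDerivAt f' (f'' x) x) (hf''c : ContinuousOn f'' (Icc a b))
    (hκf'' : ∀ x ∈ Icc a b, κ ≤ f'' x) (hb : f' b ≤ 0) :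
    ‖∫ x in a..b, cexp (I * f x)‖ ≤ 3 / √κ := by
  have hrefl : ∀ x ∈ Icc a b, a + b - x ∈ Icc a b := fun x hx =>
    ⟨by linarith [hx.2], by linarith [hx.1]⟩
  have hneg : ∀ x, HasDerivAt (fun y => a + b - y) (-1) x := fun x => by
    simpa using (hasDerivAt_id x).const_sub (a + b)
  have h := norm_integral_cexp_I_mul_le_of_le_deriv2_of_deriv_nonneg (f := fun x => f (a + b - x))
    (f' := fun x => -f' (a + b - x)) (f'' := fun x => f'' (a + b - x)) hab hκ
    (fun x hx => ((hf _ (hrefl x hx)).comp x (hneg x)).congr_deriv (by ring))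
    (fun x hx => ((hf' _ (hrefl x hx)).comp x (hneg x)).neg.congr_deriv (by ring))
    (hf''c.comp (continuous_const.sub continuous_id).continuousOn hrefl)
    (fun x hx => hκf'' _ (hrefl x hx)) (by simpa using hb)
  rwa [integral_comp_sub_left (fun x => cexp (I * f x)), add_sub_cancel_right,
    add_sub_cancel_left] at h

/-- Second derivative test of van der Corput. -/
theorem norm_integral_cexp_I_mul_le_of_le_deriv2 {κ : ℝ} (hab : a ≤ b) (hκ : 0 < κ)
    (hf : ∀ x ∈ Icc a b, HasDerivAt f (f' x) x) (hf' : ∀ x ∈ Icc a b, HasDerivAt f' (f'' x) x)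
    (hf''c : ContinuousOn f'' (Icc a b)) (hκf'' : ∀ x ∈ Icc a b, κ ≤ f'' x) :
    ‖∫ x in a..b, cexp (I * f x)‖ ≤ 6 / √κ := by
  have h36 : 3 / √κ ≤ 6 / √κ := div_le_div_of_nonneg_right (by norm_num) (Real.sqrt_nonneg κ)
  rcases le_or_gt 0 (f' a) with ha | ha
  · exact (norm_integral_cexp_I_mul_le_of_le_deriv2_of_deriv_nonneg hab hκ hf hf' hf''c hκf''
      ha).trans h36
  rcases le_or_gt (f' b) 0 with hb | hb
  · exact (norm_integral_cexp_I_mul_le_of_le_deriv2_of_deriv_nonpos hab hκ hf hf' hf''c hκf''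
      hb).trans h36
  obtain ⟨c, hc, hf'c⟩ : ∃ c ∈ Icc a b, f' c = 0 :=
    intermediate_value_Icc hab (fun x hx => (hf' x hx).continuousAt.continuousWithinAt)
      ⟨ha.le, hb.le⟩
  have hac : Icc a c ⊆ Icc a b := Icc_subset_Icc le_rfl hc.2
  have hcb : Icc c b ⊆ Icc a b := Icc_subset_Icc hc.1 le_rfl
  have hfc : ContinuousOn f (uIcc a b) := fun x hx =>
    (hf x (uIcc_of_le hab ▸ hx)).continuousAt.continuousWithinAt
  have hcmem : c ∈ uIcc a b := uIcc_of_le hab ▸ hc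
  rw [← integral_add_adjacent_intervals
    (intervalIntegrable_cexp_I_mul (hfc.mono (uIcc_subset_uIcc left_mem_uIcc hcmem)))
    (intervalIntegrable_cexp_I_mul (hfc.mono (uIcc_subset_uIcc hcmem right_mem_uIcc)))]
  have hleft := norm_integral_cexp_I_mul_le_of_le_deriv2_of_deriv_nonpos hc.1 hκ
    (fun x hx => hf x (hac hx)) (fun x hx => hf' x (hac hx)) (hf''c.mono hac)
    (fun x hx => hκf'' x (hac hx)) hf'c.le
  have hright := norm_integral_cexp_I_mul_le_of_le_deriv2_of_deriv_nonneg hc.2 hκ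
    (fun x hx => hf x (hcb hx)) (fun x hx => hf' x (hcb hx)) (hf''c.mono hcb)
    (fun x hx => hκf'' x (hcb hx)) hf'c.ge
  calc _ ≤ 3 / √κ + 3 / √κ := (norm_add_le _ _).trans (add_le_add hleft hright)
    _ = 6 / √κ := by ring

theorem norm_integral_cexp_I_mul_le_of_le_deriv2_on_subinterval {a' b' κ : ℝ} (ha' : a ≤ a')
    (ha'b' : a' ≤ b') (hb' : b' ≤ b) (hκ : 0 < κ) (hfc : ContinuousOn f (Icc a b))
    (hf : ∀ x ∈ Icc a' b', HasDerivAt f (f' x) x) (hf' : ∀ x ∈ Icc a' b', HasDerivAt f' (f'' x) x)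
    (hf''c : ContinuousOn f'' (Icc a' b')) (hκf'' : ∀ x ∈ Icc a' b', κ ≤ f'' x) :
    ‖∫ x in a..b, cexp (I * f x)‖ ≤ (a' - a) + (b - b') + 6 / √κ := by
  have hab : a ≤ b := ha'.trans (ha'b'.trans hb')
  have hint : ∀ c ∈ Icc a b, ∀ d ∈ Icc a b,
      IntervalIntegrable (fun x => cexp (I * f x)) volume c d :=
    fun c hc d hd => intervalIntegrable_cexp_I_mul (hfc.mono (uIcc_subset_Icc hc hd))
  have ha'mem : a' ∈ Icc a b := ⟨ha', ha'b'.trans hb'⟩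
  have hb'mem : b' ∈ Icc a b := ⟨ha'.trans ha'b', hb'⟩
  rw [← integral_add_adjacent_intervals (hint a (left_mem_Icc.2 hab) a' ha'mem)
      (hint a' ha'mem b (right_mem_Icc.2 hab)),
    ← integral_add_adjacent_intervals (hint a' ha'mem b' hb'mem)
      (hint b' hb'mem b (right_mem_Icc.2 hab))]
  have hmid := norm_integral_cexp_I_mul_le_of_le_deriv2 ha'b' hκ hf hf' hf''c hκf''
  have hleft := norm_integral_cexp_I_mul_le (f := f) ha'
  have hright := norm_integral_cexp_I_mul_le (f := f) hb'
  linarith [norm_add_le (∫ x in a..a', cexp (I * f x))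
      ((∫ x in a'..b', cexp (I * f x)) + ∫ x in b'..b, cexp (I * f x)),
    norm_add_le (∫ x in a'..b', cexp (I * f x)) (∫ x in b'..b, cexp (I * f x))]

end OscillatoryIntegral

theorem half_le_cos_of_abs_le {r ξ : ℝ} (hr : 0 ≤ r) (hξ : |ξ| ≤ π / 2 - r) : r / 2 ≤ cos ξ := by
  have h := one_sub_mul_le_cos (abs_nonneg ξ) (hξ.trans (by linarith))
  rw [cos_abs] at h
  have hπ : 2 / π * |ξ| ≤ 2 / π * (π / 2 - r) := by gcongr
  have h2 : 2 / π * (π / 2 - r) = 1 - 2 / π * r := by field_simp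
  have h3 : r / 2 ≤ 2 / π * r := by
    rw [div_mul_eq_mul_div, div_le_div_iff₀ two_pos pi_pos]
    nlinarith [pi_le_four]
  linarith

theorem norm_integral_cexp_linear_add_cos_le {t s r : ℝ} (hr : 0 < r) (hrπ : r ≤ π / 2)
    (htr : 1 ≤ 4 * t * r ^ 3) :
    ‖∫ ξ in (-π)..π, cexp (I * ↑(s * ξ + 2 * t * cos ξ))‖ ≤ 40 * r := by
  have ht : 0 < t := by
    by_contra! h
    nlinarith [mul_nonpos_of_nonpos_of_nonneg h (pow_pos hr 3).le]
  set φ : ℝ → ℝ := fun ξ => s * ξ + 2 * t * cos ξ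
  have hφ : ∀ ξ, HasDerivAt φ (s - 2 * t * sin ξ) ξ := fun ξ =>
    (((hasDerivAt_id ξ).const_mul s).add ((hasDerivAt_cos ξ).const_mul (2 * t))).congr_deriv
      (by ring)
  have hφ' : ∀ ξ, HasDerivAt (fun ξ => s - 2 * t * sin ξ) (-(2 * t * cos ξ)) ξ := fun ξ =>
    ((hasDerivAt_sin ξ).const_mul (2 * t)).const_sub s
  have hφc : Continuous φ := continuous_iff_continuousAt.2 fun ξ => (hφ ξ).continuousAt
  -- on the scale `r`, `|φ''| = 2t|cos ξ| ≥ t r ≥ κ` away from the zeros `±π/2` of `cos`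
  set κ : ℝ := (2 * r)⁻¹ ^ 2
  have hκ : 0 < κ := by positivity
  have hκφ'' : ∀ ξ, |ξ| ≤ π / 2 - r → κ ≤ 2 * t * cos ξ := fun ξ hξ => by
    have h := mul_le_mul_of_nonneg_left (half_le_cos_of_abs_le hr.le hξ) (by positivity : 0 ≤ 2 * t)
    have : κ * (4 * r ^ 2) = 1 := by simp only [κ]; field_simp; ring
    nlinarith
  have hsqrtκ : 6 / √κ = 12 * r := by
    rw [Real.sqrt_sq (by positivity)]; field_simp; ring
  have hπ := pi_pos
  have hleft : ‖∫ ξ in (-π)..(-(π / 2)), cexp (I * φ ξ)‖ ≤ 13 * r := by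
    refine (norm_integral_cexp_I_mul_le_of_le_deriv2_on_subinterval (b' := -(π / 2 + r)) le_rfl
      (by linarith) (by linarith) hκ hφc.continuousOn (fun ξ _ => hφ ξ) (fun ξ _ => hφ' ξ)
      (by fun_prop)
      fun ξ hξ => ?_).trans (by linarith)
    have h := hκφ'' (ξ + π) (abs_le.2 ⟨by linarith [hξ.1], by linarith [hξ.2]⟩)
    rwa [cos_add_pi, mul_neg] at h
  have hright : ‖∫ ξ in (π / 2)..π, cexp (I * φ ξ)‖ ≤ 13 * r := by
    refine (norm_integral_cexp_I_mul_le_of_le_deriv2_on_subinterval (a' := π / 2 + r) (b' := π)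
      (by linarith) (by linarith) le_rfl hκ hφc.continuousOn (fun ξ _ => hφ ξ) (fun ξ _ => hφ' ξ)
      (by fun_prop) fun ξ hξ => ?_).trans (by linarith)
    have h := hκφ'' (ξ - π) (abs_le.2 ⟨by linarith [hξ.1], by linarith [hξ.2]⟩)
    rwa [cos_sub_pi, mul_neg] at h
  have hmiddle : ‖∫ ξ in (-(π / 2))..(π / 2), cexp (I * φ ξ)‖ ≤ 14 * r := by
    rw [← norm_integral_cexp_I_mul_neg]
    refine (norm_integral_cexp_I_mul_le_of_le_deriv2_on_subinterval (a' := -(π / 2 - r))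
      (b' := π / 2 - r) (by linarith) (by linarith) (by linarith) hκ hφc.neg.continuousOn
      (fun ξ _ => (hφ ξ).neg) (fun ξ _ => (hφ' ξ).neg) (by fun_prop)
      fun ξ hξ => ?_).trans (by linarith)
    rw [neg_neg]
    exact hκφ'' ξ (abs_le.2 ⟨by linarith [hξ.1], by linarith [hξ.2]⟩)
  have hint : ∀ a b : ℝ, IntervalIntegrable (fun ξ => cexp (I * φ ξ)) volume a b :=
    fun a b => intervalIntegrable_cexp_I_mul hφc.continuousOn
  rw [← integral_add_adjacent_intervals (hint (-π) (-(π / 2))) (hint (-(π / 2)) π),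
    ← integral_add_adjacent_intervals (hint (-(π / 2)) (π / 2)) (hint (π / 2) π)]
  linarith [norm_add_le (∫ ξ in (-π)..(-(π / 2)), cexp (I * φ ξ))
      ((∫ ξ in (-(π / 2))..(π / 2), cexp (I * φ ξ)) + ∫ ξ in (π / 2)..π, cexp (I * φ ξ)),
    norm_add_le (∫ ξ in (-(π / 2))..(π / 2), cexp (I * φ ξ)) (∫ ξ in (π / 2)..π, cexp (I * φ ξ))]

theorem norm_integral_cexp_linear_add_cos_neg (t s : ℝ) :
    ‖∫ ξ in (-π)..π, cexp (I * ↑(-s * ξ + 2 * -t * cos ξ))‖ =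
      ‖∫ ξ in (-π)..π, cexp (I * ↑(s * ξ + 2 * t * cos ξ))‖ := by
  rw [← norm_integral_cexp_I_mul_neg]
  ring_nf

theorem rpow_neg_one_third_pow_three_mul {x : ℝ} (hx : 0 < x) :
    (x ^ (-(1 / 3 : ℝ))) ^ 3 * x = 1 := by
  rw [← Real.rpow_natCast, ← Real.rpow_mul hx.le]
  norm_num [Real.rpow_neg_one, hx.ne']

theorem norm_integral_cexp_linear_add_cos_le_rpow (t s : ℝ) :
    ‖∫ ξ in (-π)..π, cexp (I * ↑(s * ξ + 2 * t * cos ξ))‖ ≤ 40 * (1 + |t|) ^ (-(1 / 3 : ℝ)) := by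
  wlog ht : 0 ≤ t generalizing t s
  · have h := this (-t) (-s) (by linarith)
    rwa [norm_integral_cexp_linear_add_cos_neg, abs_neg] at h
  rw [abs_of_nonneg ht]
  set r := (1 + t) ^ (-(1 / 3 : ℝ))
  have hr : 0 < r := by positivity
  have hr3 : r ^ 3 * (1 + t) = 1 := rpow_neg_one_third_pow_three_mul (by linarith)
  have hr1 : r ≤ 1 := by
    by_contra! h
    nlinarith [one_lt_pow₀ h (by norm_num : 3 ≠ 0)]
  rcases le_or_gt (1 / 3) t with ht3 | ht3
  · exact norm_integral_cexp_linear_add_cos_le hr (hr1.trans (by linarith [pi_gt_three]))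
      (by nlinarith)
  · have hr2 : 1 / 2 ≤ r := by
      by_contra! h
      nlinarith [pow_lt_pow_left₀ h hr.le (by norm_num : 3 ≠ 0)]
    calc _ ≤ π - -π := norm_integral_cexp_I_mul_le (by linarith [pi_pos])
      _ ≤ 40 * r := by linarith [pi_lt_four]

theorem schrodingerKernel_eq (t : ℝ) (j : ℤ) :
    schrodingerKernel t j = (2 * π : ℂ)⁻¹ * cexp (-2 * I * t) *
      ∫ ξ in (-π)..π, cexp (I * ↑((j : ℝ) * ξ + 2 * t * cos ξ)) := by
  have hphase : ∀ ξ : ℝ, cexp (-4 * I * t * (sin (ξ / 2) : ℂ) ^ 2) * cexp (I * j * ξ) =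
      cexp (-2 * I * t) * cexp (I * ↑((j : ℝ) * ξ + 2 * t * cos ξ)) := fun ξ => by
    have hsin : (sin (ξ / 2) : ℂ) ^ 2 = (1 - cos ξ) / 2 := by
      rw [← Complex.ofReal_pow, sin_sq_eq_half_sub, mul_div_cancel₀ ξ two_ne_zero]
      push_cast; ring
    rw [← Complex.exp_add, ← Complex.exp_add, hsin]
    push_cast
    ring_nf
  simp_rw [schrodingerKernel, hphase, intervalIntegral.integral_const_mul]
  ring

theorem norm_schrodingerKernel (t : ℝ) (j : ℤ) :
    ‖schrodingerKernel t j‖ =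
      ‖∫ ξ in (-π)..π, cexp (I * ↑((j : ℝ) * ξ + 2 * t * cos ξ))‖ / (2 * π) := by
  have hexp : ‖cexp (-2 * I * t)‖ = 1 := by
    rw [show -2 * I * t = I * ↑(-2 * t) by push_cast; ring, Complex.norm_exp_I_mul_ofReal]
  rw [schrodingerKernel_eq, norm_mul, norm_mul, hexp, mul_one, norm_inv, inv_mul_eq_div,
    show (2 * π : ℂ) = ↑(2 * π) by push_cast; rfl, Complex.norm_real,
    Real.norm_of_nonneg (by positivity)]

theorem norm_schrodingerKernel_le (t : ℝ) (j : ℤ) :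
    ‖schrodingerKernel t j‖ ≤ 7 * (1 + |t|) ^ (-(1 / 3 : ℝ)) := by
  rw [norm_schrodingerKernel, div_le_iff₀ (by positivity)]
  refine (norm_integral_cexp_linear_add_cos_le_rpow t j).trans ?_
  have : 0 < (1 + |t|) ^ (-(1 / 3 : ℝ)) := by positivity
  nlinarith [pi_gt_three]

theorem norm_tsum_mul_le_of_norm_le {ι R : Type*} [SeminormedRing R]
    {g φ : ι → R} {B : ℝ} (hg : ∀ k, ‖g k‖ ≤ B) (hφ : Summable fun k => ‖φ k‖) :
    ‖∑' k, g k * φ k‖ ≤ B * ∑' k, ‖φ k‖ := by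
  have hle : ∀ k, ‖g k * φ k‖ ≤ B * ‖φ k‖ := fun k =>
    (norm_mul_le _ _).trans (mul_le_mul_of_nonneg_right (hg k) (norm_nonneg _))
  have hsum : Summable fun k => ‖g k * φ k‖ :=
    (hφ.mul_left B).of_nonneg_of_le (fun _ => norm_nonneg _) hle
  calc ‖∑' k, g k * φ k‖ ≤ ∑' k, ‖g k * φ k‖ := norm_tsum_le_tsum_norm hsum
    _ ≤ ∑' k, B * ‖φ k‖ := hsum.tsum_le_tsum hle (hφ.mul_left B)
    _ = B * ∑' k, ‖φ k‖ := tsum_mul_left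

/-- Dispersive `ℓ¹ → ℓ∞` decay for the discrete Schrödinger evolution on `ℤ`. -/
theorem discrete_schrodinger_linfty_decay :
    ∃ C > 0, ∀ (t : ℝ) (φ : ℤ → ℂ), Summable (fun k : ℤ => ‖φ k‖) →
      ∀ j : ℤ,
        ‖∑' k : ℤ, schrodingerKernel t (j - k) * φ k‖ ≤
          C * (1 + |t|) ^ (-(1 / 3 : ℝ)) * ∑' k : ℤ, ‖φ k‖ :=
  ⟨7, by norm_num, fun t _ hφ j =>
    norm_tsum_mul_le_of_norm_le (fun k => norm_schrodingerKernel_le t (j - k)) hφ⟩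
end

section
/- Let Δ_d be the bounded linear operator on ℓ²(ℤ; ℂ) defined by (Δ_d u)(j) = u(j+1) - 2u(j) + u(j-1). Then for every t ∈ ℝ, every φ ∈ ℓ¹(ℤ; ℂ) (viewed as an element of ℓ²(ℤ; ℂ)), and every j ∈ ℤ, one has (exp(itΔ_d) φ)(j) = Σ_{k∈ℤ} K_t(j-k) φ(k), where exp denotes the operator exponential of the bounded operator itΔ_d. -/
/-!
Under the Fourier series `φ ↦ ∑ₖ φ k e^{-ikξ}`, `Δ_d` becomes multiplication by
`m(ξ) = e^{iξ} + e^{-iξ} - 2 = -4 sin²(ξ/2)`: multiplying a function by `m` takes second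
differences of its Fourier coefficients. Hence `Δ_dⁿ φ` is the convolution of `φ` with the
coefficients of `mⁿ`, which are bounded by `4ⁿ`. Summing the exponential series, the double series
over `n` and `k` converges absolutely because `φ ∈ ℓ¹`, so the sums may be swapped, and the sum over
`n` of the coefficients of `(itm)ⁿ/n!` is the coefficient of `e^{itm}`, i.e. the kernel `K_t`.
-/

open Real MeasureTheory

namespace DiscreteSchrodinger

open Complex (I)
open intervalIntegral

/-- The coefficient of `e^{-ijξ}` in the Fourier series of `a` on `[-π, π]`. -/
noncomputable def circleCoeff (a : ℝ → ℂ) (j : ℤ) : ℂ :=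
  (1 / (2 * π)) * ∫ ξ in (-π)..π, a ξ * Complex.exp (I * j * ξ)

lemma norm_exp_I_mul_intCast_mul (j : ℤ) (ξ : ℝ) : ‖Complex.exp (I * j * ξ)‖ = 1 := by
  rw [Complex.norm_exp]; simp

lemma circleCoeff_const_mul (c : ℂ) (a : ℝ → ℂ) (j : ℤ) :
    circleCoeff (fun ξ => c * a ξ) j = c * circleCoeff a j := by
  simp only [circleCoeff, mul_assoc, intervalIntegral.integral_const_mul]
  ring

lemma circleCoeff_one (j : ℤ) : circleCoeff (fun _ => 1) j = if j = 0 then 1 else 0 := by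
  split_ifs with hj
  · subst hj
    simp only [circleCoeff, Int.cast_zero, mul_zero, zero_mul, Complex.exp_zero, mul_one,
      intervalIntegral.integral_const, Complex.real_smul]
    push_cast
    field_simp [Real.pi_ne_zero]
    ring
  · have hc : I * j ≠ 0 := by simpa [Complex.I_ne_zero] using hj
    have hperiod : Complex.exp (I * j * π) = Complex.exp (I * j * (-π : ℝ)) := by
      rw [show I * j * π = I * j * (-π : ℝ) + j * (2 * π * I) by push_cast; ring,
        Complex.exp_add, Complex.exp_int_mul_two_pi_mul_I, mul_one]
    simp only [circleCoeff, one_mul, integral_exp_mul_complex hc, hperiod, sub_self, zero_div,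
      mul_zero]

lemma norm_circleCoeff_le {a : ℝ → ℂ} {M : ℝ} (ha : ∀ ξ, ‖a ξ‖ ≤ M) (j : ℤ) :
    ‖circleCoeff a j‖ ≤ M := by
  have hint : ‖∫ ξ in (-π)..π, a ξ * Complex.exp (I * j * ξ)‖ ≤ M * |π - -π| :=
    norm_integral_le_of_norm_le_const fun ξ _ => by
      rw [norm_mul, norm_exp_I_mul_intCast_mul, mul_one]
      exact ha ξ
  rw [show π - -π = 2 * π by ring, abs_of_pos Real.two_pi_pos] at hint
  rw [circleCoeff, norm_mul, ← le_div_iff₀' (by simp)]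
  simpa [abs_of_pos Real.pi_pos, div_eq_mul_inv, mul_comm, mul_left_comm] using hint

lemma hasSum_circleCoeff {ι : Type*} [Countable ι] {f : ι → ℝ → ℂ} {b : ι → ℝ}
    (hf : ∀ n, Continuous (f n)) (hfb : ∀ n ξ, ‖f n ξ‖ ≤ b n) (hb : Summable b) (j : ℤ) :
    HasSum (fun n => circleCoeff (f n) j) (circleCoeff (fun ξ => ∑' n, f n ξ) j) := by
  refine HasSum.mul_left _ (hasSum_integral_of_dominated_convergence (fun n _ => b n)
    (fun n => by fun_prop) (fun n => .of_forall fun ξ _ => ?_) (.of_forall fun _ _ => hb)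
    intervalIntegrable_const (.of_forall fun ξ _ => ?_))
  · rw [norm_mul, norm_exp_I_mul_intCast_mul, mul_one]
    exact hfb n ξ
  · exact ((hb.of_norm_bounded (hfb · ξ)).hasSum.mul_right _)

noncomputable def laplacianSymbol (ξ : ℝ) : ℂ := -4 * (Real.sin (ξ / 2) : ℂ) ^ 2

@[fun_prop]
lemma continuous_laplacianSymbol : Continuous laplacianSymbol := by
  unfold laplacianSymbol; fun_prop

lemma norm_laplacianSymbol_le (ξ : ℝ) : ‖laplacianSymbol ξ‖ ≤ 4 := by
  simp only [laplacianSymbol, norm_mul, norm_pow, Complex.norm_real, Real.norm_eq_abs, sq_abs]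
  norm_num
  exact Real.abs_sin_le_one _

lemma norm_laplacianSymbol_pow_le (n : ℕ) (ξ : ℝ) : ‖laplacianSymbol ξ ^ n‖ ≤ 4 ^ n := by
  rw [norm_pow]
  exact pow_le_pow_left₀ (norm_nonneg _) (norm_laplacianSymbol_le ξ) n

lemma laplacianSymbol_eq (ξ : ℝ) :
    laplacianSymbol ξ = Complex.exp (ξ * I) + Complex.exp (-ξ * I) - 2 := by
  rw [← Complex.two_cos, laplacianSymbol, Complex.ofReal_sin, Complex.sin_sq, Complex.cos_sq]
  push_cast
  ring_nf

lemma laplacianSymbol_mul_exp (ξ : ℝ) (j : ℤ) :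
    laplacianSymbol ξ * Complex.exp (I * j * ξ) = Complex.exp (I * (j + 1 : ℤ) * ξ)
      - 2 * Complex.exp (I * j * ξ) + Complex.exp (I * (j - 1 : ℤ) * ξ) := by
  rw [laplacianSymbol_eq]
  simp only [add_mul, sub_mul, ← Complex.exp_add]
  push_cast
  ring_nf

lemma circleCoeff_laplacianSymbol_mul {a : ℝ → ℂ} (ha : Continuous a) (j : ℤ) :
    circleCoeff (fun ξ => laplacianSymbol ξ * a ξ) j =
      circleCoeff a (j + 1) - 2 * circleCoeff a j + circleCoeff a (j - 1) := by
  have hint (i : ℤ) :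
      IntervalIntegrable (fun ξ : ℝ => a ξ * Complex.exp (I * i * ξ)) volume (-π) π :=
    (by fun_prop : Continuous _).intervalIntegrable _ _
  have hpt (ξ : ℝ) : laplacianSymbol ξ * a ξ * Complex.exp (I * j * ξ) =
      a ξ * Complex.exp (I * (j + 1 : ℤ) * ξ) - 2 * (a ξ * Complex.exp (I * j * ξ))
        + a ξ * Complex.exp (I * (j - 1 : ℤ) * ξ) := by
    rw [mul_comm (laplacianSymbol ξ), mul_assoc, laplacianSymbol_mul_exp]
    ring
  simp only [circleCoeff, hpt, integral_add ((hint _).sub ((hint _).const_mul 2)) (hint _),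
    integral_sub (hint _) ((hint _).const_mul 2), intervalIntegral.integral_const_mul]
  ring

noncomputable def laplacianPowKernel (n : ℕ) (j : ℤ) : ℂ :=
  circleCoeff (fun ξ => laplacianSymbol ξ ^ n) j

lemma laplacianPowKernel_zero (j : ℤ) : laplacianPowKernel 0 j = if j = 0 then 1 else 0 := by
  simp only [laplacianPowKernel, pow_zero, circleCoeff_one]

lemma laplacianPowKernel_succ (n : ℕ) (j : ℤ) :
    laplacianPowKernel (n + 1) j = laplacianPowKernel n (j + 1) - 2 * laplacianPowKernel n j
      + laplacianPowKernel n (j - 1) := by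
  simp only [laplacianPowKernel, pow_succ']
  exact circleCoeff_laplacianSymbol_mul (by fun_prop) j

lemma norm_laplacianPowKernel_le (n : ℕ) (j : ℤ) : ‖laplacianPowKernel n j‖ ≤ 4 ^ n :=
  norm_circleCoeff_le (norm_laplacianSymbol_pow_le n) j

lemma summable_mul_of_bounded {ι : Type*} {c φ : ι → ℂ} {M : ℝ} (hc : ∀ k, ‖c k‖ ≤ M)
    (hφ : Summable fun k => ‖φ k‖) : Summable fun k => c k * φ k :=
  (hφ.mul_left M).of_norm_bounded fun k =>
    (norm_mul_le _ _).trans (mul_le_mul_of_nonneg_right (hc k) (norm_nonneg _))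

lemma laplacian_pow_apply_eq_tsum {Δd : lp (fun _ : ℤ => ℂ) 2 →L[ℂ] lp (fun _ : ℤ => ℂ) 2}
    (hΔd : ∀ (u : lp (fun _ : ℤ => ℂ) 2) (j : ℤ),
      (Δd u : ℤ → ℂ) j = u (j + 1) - 2 * u j + u (j - 1))
    {φ : lp (fun _ : ℤ => ℂ) 2} (hφ : Summable fun k => ‖(φ : ℤ → ℂ) k‖) (n : ℕ) (j : ℤ) :
    ((Δd ^ n) φ : ℤ → ℂ) j = ∑' k, laplacianPowKernel n (j - k) * (φ : ℤ → ℂ) k := by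
  induction n generalizing j with
  | zero => simp [laplacianPowKernel_zero, sub_eq_zero]
  | succ n ih =>
    have hsum (i : ℤ) :=
      summable_mul_of_bounded (fun k => norm_laplacianPowKernel_le n (i - k)) hφ
    rw [pow_succ', mul_apply_eq_comp, hΔd, ih, ih, ih, ← tsum_mul_left,
      ← (hsum _).tsum_sub ((hsum _).mul_left 2),
      ← ((hsum _).sub ((hsum _).mul_left 2)).tsum_add (hsum _)]
    refine tsum_congr fun k => ?_
    rw [laplacianPowKernel_succ, show j - k + 1 = j + 1 - k by ring, sub_right_comm j]
    ring

lemma norm_inv_factorial_mul_pow_mul_le {w z : ℂ} {C : ℝ} {n : ℕ} (hz : ‖z‖ ≤ C ^ n) :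
    ‖(n.factorial : ℂ)⁻¹ * w ^ n * z‖ ≤ (C * ‖w‖) ^ n / n.factorial := by
  rw [norm_mul, norm_mul, norm_inv, norm_pow, Complex.norm_natCast, mul_pow, inv_mul_eq_div,
    div_mul_eq_mul_div, mul_comm (C ^ n)]
  gcongr

lemma schrodingerKernel_eq_circleCoeff (t : ℝ) (j : ℤ) :
    schrodingerKernel t j = circleCoeff (fun ξ => Complex.exp (I * t * laplacianSymbol ξ)) j := by
  unfold schrodingerKernel circleCoeff laplacianSymbol
  congr 2 with ξ
  ring_nf

lemma hasSum_schrodingerKernel (t : ℝ) (j : ℤ) :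
    HasSum (fun n : ℕ => (n.factorial : ℂ)⁻¹ * (I * t) ^ n * laplacianPowKernel n j)
      (schrodingerKernel t j) := by
  have hexp (ξ : ℝ) : ∑' n : ℕ, (n.factorial : ℂ)⁻¹ * (I * t) ^ n * laplacianSymbol ξ ^ n =
      Complex.exp (I * t * laplacianSymbol ξ) := by
    simp_rw [mul_assoc, ← mul_pow, ← smul_eq_mul (a := ((_ : ℕ).factorial : ℂ)⁻¹)]
    rw [Complex.exp_eq_exp_ℂ, (NormedSpace.exp_series_hasSum_exp' (𝕂 := ℂ) _).tsum_eq, mul_assoc]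
  have := hasSum_circleCoeff
    (f := fun n ξ => (n.factorial : ℂ)⁻¹ * (I * t) ^ n * laplacianSymbol ξ ^ n)
    (fun n => by fun_prop)
    (fun n ξ => norm_inv_factorial_mul_pow_mul_le (norm_laplacianSymbol_pow_le n ξ))
    (Real.summable_pow_div_factorial (4 * ‖I * t‖)) j
  simpa only [circleCoeff_const_mul, hexp, ← schrodingerKernel_eq_circleCoeff, laplacianPowKernel]
    using this

lemma tsum_comm_of_norm_le_mul {ι κ E : Type*} [NormedAddCommGroup E] [CompleteSpace E]
    {f : ι → κ → E} {a : ι → ℝ} {b : κ → ℝ} (ha : Summable a) (hb : Summable b)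
    (ha0 : 0 ≤ a) (hb0 : 0 ≤ b) (hf : ∀ i k, ‖f i k‖ ≤ a i * b k) :
    ∑' i, ∑' k, f i k = ∑' k, ∑' i, f i k :=
  ((ha.mul_of_nonneg hb ha0 hb0).of_norm_bounded fun p => hf p.1 p.2).tsum_comm.symm

lemma hasSum_exp_apply_apply {ι : Type*} {p : ENNReal} [Fact (1 ≤ p)]
    (A : lp (fun _ : ι => ℂ) p →L[ℂ] lp (fun _ : ι => ℂ) p) (u : lp (fun _ : ι => ℂ) p) (j : ι) :
    HasSum (fun n : ℕ => (n.factorial : ℂ)⁻¹ * ((A ^ n) u : ι → ℂ) j)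
      ((NormedSpace.exp A u : ι → ℂ) j) :=
  ((NormedSpace.exp_series_hasSum_exp' (𝕂 := ℂ) A).mapL
    (ContinuousLinearMap.apply ℂ _ u)).mapL (lp.evalCLM ℂ _ p j)

end DiscreteSchrodinger

open DiscreteSchrodinger
open Complex (I)

/-- If `Δ_d` is the bounded operator on `ℓ²(ℤ; ℂ)` given by
`(Δ_d u)(j) = u(j+1) - 2u(j) + u(j-1)`, then the Schrödinger group `exp(itΔ_d)` acts on
`ℓ¹`-data by convolution with the discrete Schrödinger kernel. -/
theorem discrete_schrodinger_semigroup_eq_kernel_convolution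
    (Δd : lp (fun _ : ℤ => ℂ) 2 →L[ℂ] lp (fun _ : ℤ => ℂ) 2)
    (hΔd : ∀ (u : lp (fun _ : ℤ => ℂ) 2) (j : ℤ),
      (Δd u : ℤ → ℂ) j = u (j + 1) - 2 * u j + u (j - 1)) :
    ∀ (t : ℝ) (φ : lp (fun _ : ℤ => ℂ) 2), Summable (fun k : ℤ => ‖(φ : ℤ → ℂ) k‖) →
      ∀ j : ℤ,
        ((NormedSpace.exp ((Complex.I * (t : ℂ)) • Δd)) φ : ℤ → ℂ) j =
          ∑' k : ℤ, schrodingerKernel t (j - k) * (φ : ℤ → ℂ) k := by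
  intro t φ hφ j
  have hseries := hasSum_exp_apply_apply ((I * t) • Δd) φ j
  simp only [smul_pow, smul_apply, lp.coeFn_smul, Pi.smul_apply, smul_eq_mul,
    laplacian_pow_apply_eq_tsum hΔd hφ, ← tsum_mul_left, ← mul_assoc] at hseries
  rw [← hseries.tsum_eq, tsum_comm_of_norm_le_mul (Real.summable_pow_div_factorial (4 * ‖I * t‖))
    hφ (fun n => by positivity) (fun k => norm_nonneg _) fun n k => ?_]
  · exact tsum_congr fun k => by rw [tsum_mul_right, (hasSum_schrodingerKernel t _).tsum_eq]
  · rw [norm_mul]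
    exact mul_le_mul_of_nonneg_right
      (norm_inv_factorial_mul_pow_mul_le (norm_laplacianPowKernel_le n _)) (norm_nonneg _)
end

section
/- (Van der Corput lemma) For every integer k ≥ 2 there exists a constant c_k > 0, depending only on k, such that for all real numbers a < b, every k-times continuously differentiable function ψ : [a, b] → ℝ with |ψ^{(k)}(ξ)| ≥ 1 for all ξ ∈ [a, b], and every λ > 0, one has |∫_a^b e^{iλψ(ξ)} dξ| ≤ c_k λ^{-1/k}; the constant c_k is independent of a, b, ψ and λ. -/
/-!
Induction on `k`. For `k = 1` and `ψ'` monotone with `|ψ'| ≥ μ`, integrating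
`e^{iλψ} = (iλψ')⁻¹ (e^{iλψ})'` by parts gives `O(1 / (λμ))`. If `|ψ^{(k)}| ≥ μ`, then
`ψ^{(k-1)}` grows at rate `μ` away from a single point `c`, so `|ψ^{(k-1)}| ≥ μδ` outside
`(c - δ, c + δ)`. There the order-`(k-1)` bound applies; on the remaining interval of length `2δ`
the integrand has modulus one. Choosing `δ = (λμ)^{-1/k}` balances the two contributions.
-/

open Real MeasureTheory Set

noncomputable def oscillatoryIntegral (L : ℝ) (φ : ℝ → ℝ) (a b : ℝ) : ℂ :=
  ∫ ξ in a..b, Complex.exp (Complex.I * L * φ ξ)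

lemma norm_exp_I_mul_ofReal_mul (L t : ℝ) : ‖Complex.exp (Complex.I * L * t)‖ = 1 := by
  rw [mul_assoc, ← Complex.ofReal_mul, Complex.norm_exp_I_mul_ofReal]

lemma ContinuousOn.le_or_le_neg_of_le_abs {s : Set ℝ} (hs : IsPreconnected s) {g : ℝ → ℝ}
    (hg : ContinuousOn g s) {μ : ℝ} (hμ : 0 < μ) (h : ∀ x ∈ s, μ ≤ |g x|) :
    (∀ x ∈ s, μ ≤ g x) ∨ ∀ x ∈ s, g x ≤ -μ := by
  by_contra! ⟨⟨x, hx, hgx⟩, ⟨y, hy, hgy⟩⟩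
  have hx' : g x ≤ -μ := (le_abs'.mp (h x hx)).resolve_right hgx.not_ge
  have hy' : μ ≤ g y := (le_abs'.mp (h y hy)).resolve_left hgy.not_ge
  obtain ⟨z, hz, hgz⟩ := hs.intermediate_value hx hy hg
    (show (0 : ℝ) ∈ Icc (g x) (g y) from ⟨by linarith, by linarith⟩)
  linarith [h z hz, abs_eq_zero.mpr hgz]

/-- `c` is a zero of `g` if there is one, otherwise the endpoint where `|g|` is smallest. -/
lemma exists_mul_abs_sub_le_abs_of_le_deriv {g g' : ℝ → ℝ} {a b μ : ℝ} (hμ : 0 ≤ μ)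
    (hg : ∀ x ∈ Icc a b, HasDerivWithinAt g (g' x) (Icc a b) x)
    (hg' : ∀ x ∈ Icc a b, μ ≤ g' x) :
    ∃ c, ∀ x ∈ Icc a b, μ * |x - c| ≤ |g x| := by
  rcases lt_or_ge b a with hba | hab
  · exact ⟨0, fun x hx => absurd (hx.1.trans hx.2) hba.not_ge⟩
  have hcont : ContinuousOn g (Icc a b) := fun x hx => (hg x hx).continuousWithinAt
  have hgrowth : ∀ x ∈ Icc a b, ∀ y ∈ Icc a b, x ≤ y → μ * (y - x) ≤ g y - g x := by
    have hmono : MonotoneOn (fun x => g x - μ * x) (Icc a b) :=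
      monotoneOn_of_hasDerivWithinAt_nonneg (convex_Icc a b)
        (hcont.sub (continuousOn_const.mul continuousOn_id))
        (fun x hx => (((hg x (interior_subset hx)).sub
          ((hasDerivWithinAt_id x _).const_mul μ)).mono interior_subset))
        (fun x hx => by linarith [hg' x (interior_subset hx)])
    intro x hx y hy hxy
    linarith [hmono hx hy hxy]
  by_cases hga : 0 < g a
  · refine ⟨a, fun x hx => ?_⟩
    have := hgrowth a (left_mem_Icc.2 hab) x hx hx.1
    rw [abs_of_nonneg (sub_nonneg.2 hx.1), abs_of_pos (by nlinarith [hx.1])]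
    linarith
  by_cases hgb : g b < 0
  · refine ⟨b, fun x hx => ?_⟩
    have := hgrowth x hx b (right_mem_Icc.2 hab) hx.2
    rw [abs_of_nonpos (sub_nonpos.2 hx.2), abs_of_neg (by nlinarith [hx.2])]
    linarith
  obtain ⟨c, hc, hgc⟩ := intermediate_value_Icc hab hcont ⟨not_lt.1 hga, not_lt.1 hgb⟩
  refine ⟨c, fun x hx => ?_⟩
  rcases le_total c x with hcx | hxc
  · have := hgrowth c hc x hx hcx
    rw [abs_of_nonneg (sub_nonneg.2 hcx), abs_of_nonneg (by nlinarith)]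
    linarith
  · have := hgrowth x hx c hc hxc
    rw [abs_of_nonpos (sub_nonpos.2 hxc), abs_of_nonpos (by nlinarith)]
    linarith

lemma exists_mul_abs_sub_le_abs_of_le_abs_deriv {g g' : ℝ → ℝ} {a b μ : ℝ} (hμ : 0 < μ)
    (hg : ∀ x ∈ Icc a b, HasDerivWithinAt g (g' x) (Icc a b) x)
    (hg' : ContinuousOn g' (Icc a b)) (hμg' : ∀ x ∈ Icc a b, μ ≤ |g' x|) :
    ∃ c, ∀ x ∈ Icc a b, μ * |x - c| ≤ |g x| := by
  rcases hg'.le_or_le_neg_of_le_abs isPreconnected_Icc hμ hμg' with hpos | hneg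
  · exact exists_mul_abs_sub_le_abs_of_le_deriv hμ.le hg hpos
  · obtain ⟨c, hc⟩ := exists_mul_abs_sub_le_abs_of_le_deriv hμ.le (fun x hx => (hg x hx).neg)
      (fun x hx => le_neg_of_le_neg (hneg x hx))
    exact ⟨c, fun x hx => by simpa only [Pi.neg_apply, abs_neg] using hc x hx⟩

/-- Cutting `[a, b]` at the points of `[c - δ, c + δ]` nearest to `a` and `b`, the middle piece
has length at most `2δ` and the outer pieces avoid `(c - δ, c + δ)`. -/
lemma norm_integral_le_of_bound_away_from {F : Type*} [NormedAddCommGroup F] [NormedSpace ℝ F]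
    {E : ℝ → F} {a b c δ B : ℝ} (hab : a ≤ b) (hδ : 0 ≤ δ) (hB : 0 ≤ B)
    (hE : IntervalIntegrable E volume a b) (hE_norm : ∀ x ∈ Icc a b, ‖E x‖ ≤ 1)
    (haway : ∀ a' b', a ≤ a' → a' < b' → b' ≤ b → (∀ x ∈ Icc a' b', δ ≤ |x - c|) →
      ‖∫ x in a'..b', E x‖ ≤ B) :
    ‖∫ x in a..b, E x‖ ≤ 2 * B + 2 * δ := by
  set u := max a (min b (c - δ)) with hu
  set v := max a (min b (c + δ)) with hv
  have hau : a ≤ u := le_max_left _ _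
  have huv : u ≤ v := max_le_max le_rfl (min_le_min le_rfl (by linarith))
  have hvb : v ≤ b := max_le hab (min_le_left _ _)
  have hint : ∀ {x y}, x ∈ Icc a b → y ∈ Icc a b → IntervalIntegrable E volume x y :=
    fun hx hy => hE.mono_set (by rw [uIcc_of_le hab]; exact uIcc_subset_Icc hx hy)
  have hleft : ‖∫ x in a..u, E x‖ ≤ B := by
    rcases hau.eq_or_lt with heq | hlt
    · rwa [← heq, intervalIntegral.integral_same, norm_zero]
    refine haway a u le_rfl hlt (huv.trans hvb) fun x hx => ?_
    have : u ≤ c - δ := by rw [hu, max_def, min_def] at hlt ⊢; split_ifs at hlt ⊢ <;> linarith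
    rw [abs_sub_comm]
    exact le_abs.2 (Or.inl (by linarith [hx.2]))
  have hright : ‖∫ x in v..b, E x‖ ≤ B := by
    rcases hvb.eq_or_lt with heq | hlt
    · rwa [heq, intervalIntegral.integral_same, norm_zero]
    refine haway v b (hau.trans huv) hlt le_rfl fun x hx => ?_
    have : c + δ ≤ v := by rw [hv, max_def, min_def] at hlt ⊢; split_ifs at hlt ⊢ <;> linarith
    exact le_abs.2 (Or.inl (by linarith [hx.1]))
  have hmiddle : ‖∫ x in u..v, E x‖ ≤ 2 * δ := by
    refine (intervalIntegral.norm_integral_le_of_norm_le_const (C := 1) fun x hx => ?_).trans ?_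
    · rw [uIoc_of_le huv] at hx
      exact hE_norm x ⟨hau.trans hx.1.le, hx.2.trans hvb⟩
    · rw [one_mul, abs_of_nonneg (sub_nonneg.2 huv), hu, hv, max_def, max_def, min_def, min_def]
      split_ifs <;> linarith
  have ha : a ∈ Icc a b := left_mem_Icc.2 hab
  have hb : b ∈ Icc a b := right_mem_Icc.2 hab
  have hu_mem : u ∈ Icc a b := ⟨hau, huv.trans hvb⟩
  have hv_mem : v ∈ Icc a b := ⟨hau.trans huv, hvb⟩
  rw [← intervalIntegral.integral_add_adjacent_intervals (hint ha hv_mem) (hint hv_mem hb),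
    ← intervalIntegral.integral_add_adjacent_intervals (hint ha hu_mem) (hint hu_mem hv_mem)]
  linarith [norm_add₃_le (a := ∫ x in a..u, E x) (b := ∫ x in u..v, E x) (c := ∫ x in v..b, E x)]

lemma integral_abs_deriv_eq_abs_sub {u u' : ℝ → ℝ} {a b : ℝ} (hab : a ≤ b)
    (hu : ∀ x ∈ Icc a b, HasDerivWithinAt u (u' x) (Icc a b) x) (hu' : ContinuousOn u' (Icc a b))
    (hsign : (∀ x ∈ Icc a b, 0 ≤ u' x) ∨ ∀ x ∈ Icc a b, u' x ≤ 0) :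
    ∫ x in a..b, |u' x| = |u b - u a| := by
  have hftc : ∫ x in a..b, u' x = u b - u a :=
    intervalIntegral.integral_eq_sub_of_hasDeriv_right_of_le hab
      (fun x hx => (hu x hx).continuousWithinAt)
      (fun x hx => ((hu x (Ioo_subset_Icc_self hx)).hasDerivAt
        (Icc_mem_nhds hx.1 hx.2)).hasDerivWithinAt)
      (hu'.intervalIntegrable_of_Icc hab)
  have hIcc : uIcc a b = Icc a b := uIcc_of_le hab
  rcases hsign with h | h
  · have hu'_abs : EqOn (fun x => |u' x|) u' (uIcc a b) := fun x hx =>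
      abs_of_nonneg (h x (hIcc ▸ hx))
    rw [intervalIntegral.integral_congr hu'_abs, hftc,
      abs_of_nonneg (hftc ▸ intervalIntegral.integral_nonneg hab h)]
  · have hu'_abs : EqOn (fun x => |u' x|) (fun x => -u' x) (uIcc a b) := fun x hx =>
      abs_of_nonpos (h x (hIcc ▸ hx))
    have hneg : 0 ≤ ∫ x in a..b, -u' x :=
      intervalIntegral.integral_nonneg hab fun x hx => neg_nonneg.2 (h x hx)
    rw [intervalIntegral.integral_neg, hftc] at hneg
    rw [intervalIntegral.integral_congr hu'_abs, intervalIntegral.integral_neg, hftc,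
      abs_of_nonpos (neg_nonneg.1 hneg)]

lemma norm_integral_mul_deriv_le {u u' : ℝ → ℝ} {v v' : ℝ → ℂ} {a b : ℝ} (hab : a ≤ b)
    (hu : ∀ x ∈ Icc a b, HasDerivWithinAt u (u' x) (Icc a b) x) (hu' : ContinuousOn u' (Icc a b))
    (hu'_sign : (∀ x ∈ Icc a b, 0 ≤ u' x) ∨ ∀ x ∈ Icc a b, u' x ≤ 0)
    (hv : ∀ x ∈ Icc a b, HasDerivWithinAt v (v' x) (Icc a b) x) (hv' : ContinuousOn v' (Icc a b))
    (hv_norm : ∀ x ∈ Icc a b, ‖v x‖ ≤ 1) :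
    ‖∫ x in a..b, (u x : ℂ) * v' x‖ ≤ |u a| + |u b| + |u b - u a| := by
  have hIcc : uIcc a b = Icc a b := uIcc_of_le hab
  rw [intervalIntegral.integral_mul_deriv_eq_deriv_mul_of_hasDerivWithinAt
    (u' := fun x => (u' x : ℂ))
    (hIcc ▸ fun x hx => (hu x hx).ofReal_comp) (hIcc ▸ hv)
    ((Complex.continuous_ofReal.comp_continuousOn hu').intervalIntegrable_of_Icc hab)
    (hv'.intervalIntegrable_of_Icc hab)]
  have hboundary : ∀ x ∈ Icc a b, ‖(u x : ℂ) * v x‖ ≤ |u x| := fun x hx => by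
    rw [norm_mul, Complex.norm_real, Real.norm_eq_abs]
    exact mul_le_of_le_one_right (abs_nonneg _) (hv_norm x hx)
  have hinterior : ‖∫ x in a..b, (u' x : ℂ) * v x‖ ≤ ∫ x in a..b, |u' x| := by
    refine intervalIntegral.norm_integral_le_of_norm_le hab (ae_of_all _ fun x hx => ?_)
      (hu'.abs.intervalIntegrable_of_Icc hab)
    rw [norm_mul, Complex.norm_real, Real.norm_eq_abs]
    exact mul_le_of_le_one_right (abs_nonneg _) (hv_norm x (Ioc_subset_Icc_self hx))
  rw [integral_abs_deriv_eq_abs_sub hab hu hu' hu'_sign] at hinterior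
  linarith [norm_sub_le ((u b : ℂ) * v b - (u a : ℂ) * v a) (∫ x in a..b, (u' x : ℂ) * v x),
    norm_sub_le ((u b : ℂ) * v b) ((u a : ℂ) * v a),
    hboundary a (left_mem_Icc.2 hab), hboundary b (right_mem_Icc.2 hab)]

/-- Integrate `e^{iLφ} = (iLφ')⁻¹ (e^{iLφ})'` by parts; `1 / φ'` is monotone because `φ''` has
constant sign. -/
lemma norm_oscillatoryIntegral_le_of_le_abs_deriv {φ φ' φ'' : ℝ → ℝ} {a b L μ : ℝ}
    (hab : a ≤ b) (hL : 0 < L) (hμ : 0 < μ)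
    (hφ : ∀ x ∈ Icc a b, HasDerivWithinAt φ (φ' x) (Icc a b) x)
    (hφ' : ∀ x ∈ Icc a b, HasDerivWithinAt φ' (φ'' x) (Icc a b) x)
    (hφ'' : ContinuousOn φ'' (Icc a b))
    (hsign : (∀ x ∈ Icc a b, 0 ≤ φ'' x) ∨ ∀ x ∈ Icc a b, φ'' x ≤ 0)
    (hμφ' : ∀ x ∈ Icc a b, μ ≤ |φ' x|) :
    ‖oscillatoryIntegral L φ a b‖ ≤ 4 / (L * μ) := by
  have hne : ∀ x ∈ Icc a b, φ' x ≠ 0 := fun x hx => abs_pos.1 (hμ.trans_le (hμφ' x hx))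
  have hinv : ∀ x ∈ Icc a b, |(φ' x)⁻¹| ≤ μ⁻¹ := fun x hx => by
    rw [abs_inv]; exact inv_anti₀ hμ (hμφ' x hx)
  have hφ'c : ContinuousOn φ' (Icc a b) := fun x hx => (hφ' x hx).continuousWithinAt
  set e : ℝ → ℂ := fun x => Complex.exp (Complex.I * L * φ x)
  have he : ∀ x ∈ Icc a b, HasDerivWithinAt e (Complex.I * L * φ' x * e x) (Icc a b) x :=
    fun x hx => by
      simpa [e, mul_comm] using (((hφ x hx).ofReal_comp).const_mul (Complex.I * L)).cexp
  have he' : ContinuousOn (fun x => Complex.I * L * φ' x * e x) (Icc a b) :=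
    (continuousOn_const.mul (Complex.continuous_ofReal.comp_continuousOn hφ'c)).mul
      fun x hx => (he x hx).continuousWithinAt
  have hIBP := norm_integral_mul_deriv_le (u := fun x => (φ' x)⁻¹) hab
    (fun x hx => (hφ' x hx).inv (hne x hx))
    (hφ''.neg.div (hφ'c.pow 2) fun x hx => pow_ne_zero 2 (hne x hx))
    (hsign.symm.imp (fun h x hx => div_nonneg (neg_nonneg.2 (h x hx)) (sq_nonneg _))
      (fun h x hx => div_nonpos_of_nonpos_of_nonneg (neg_nonpos.2 (h x hx)) (sq_nonneg _)))
    he he' (fun x _ => (norm_exp_I_mul_ofReal_mul L (φ x)).le)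
  have hkey : ∫ x in a..b, ((φ' x)⁻¹ : ℝ) * (Complex.I * L * φ' x * e x) =
      Complex.I * L * oscillatoryIntegral L φ a b := by
    rw [oscillatoryIntegral, ← intervalIntegral.integral_const_mul]
    refine intervalIntegral.integral_congr fun x hx => ?_
    have : (φ' x : ℂ) ≠ 0 := Complex.ofReal_ne_zero.2 (hne x (uIcc_of_le hab ▸ hx))
    push_cast
    field_simp
    rfl
  rw [hkey, norm_mul, norm_mul, Complex.norm_I, one_mul, Complex.norm_real, Real.norm_eq_abs,
    abs_of_pos hL] at hIBP
  have hbound : L * ‖oscillatoryIntegral L φ a b‖ ≤ 4 / μ := by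
    have := abs_sub ((φ' b)⁻¹) ((φ' a)⁻¹)
    rw [div_eq_mul_inv]
    linarith [hinv a (left_mem_Icc.2 hab), hinv b (right_mem_Icc.2 hab)]
  rwa [mul_comm L μ, ← div_div, le_div_iff₀ hL, mul_comm]

lemma rpow_neg_inv_mul_rpow_neg_inv_add_one {M r : ℝ} (hM : 0 < M) (hr : 0 < r) :
    (M * M ^ (-(1 / (r + 1)))) ^ (-(1 / r)) = M ^ (-(1 / (r + 1))) := by
  have hlt : 1 / (r + 1) < 1 := (div_lt_one (by linarith)).2 (by linarith)
  rw [← Real.rpow_one_add' hM.le (by linarith), ← Real.rpow_mul hM.le]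
  congr 1
  field_simp
  ring

/-- `δ = (Lμ)^{-1/(r+1)}` balances the two terms of `norm_integral_le_of_bound_away_from`. -/
lemma norm_oscillatoryIntegral_le_of_le_abs_deriv_of_pieces {φ g g' : ℝ → ℝ} {a b L μ r C : ℝ}
    (hab : a ≤ b) (hL : 0 < L) (hμ : 0 < μ) (hr : 0 < r) (hC : 0 ≤ C)
    (hφ : ContinuousOn φ (Icc a b))
    (hg : ∀ x ∈ Icc a b, HasDerivWithinAt g (g' x) (Icc a b) x)
    (hg' : ContinuousOn g' (Icc a b)) (hμg' : ∀ x ∈ Icc a b, μ ≤ |g' x|)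
    (hpieces : ∀ a' b' ν, a ≤ a' → a' < b' → b' ≤ b → 0 < ν → (∀ x ∈ Icc a' b', ν ≤ |g x|) →
      ‖oscillatoryIntegral L φ a' b'‖ ≤ C * (L * ν) ^ (-(1 / r))) :
    ‖oscillatoryIntegral L φ a b‖ ≤ (2 * C + 2) * (L * μ) ^ (-(1 / (r + 1))) := by
  obtain ⟨c, hc⟩ := exists_mul_abs_sub_le_abs_of_le_abs_deriv hμ hg hg' hμg'
  set δ := (L * μ) ^ (-(1 / (r + 1)))
  have hδ : 0 < δ := by positivity
  have haway : ∀ a' b', a ≤ a' → a' < b' → b' ≤ b → (∀ x ∈ Icc a' b', δ ≤ |x - c|) →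
      ‖oscillatoryIntegral L φ a' b'‖ ≤ C * δ := by
    intro a' b' ha' hab' hb' hfar
    have := hpieces a' b' (μ * δ) ha' hab' hb' (by positivity) fun x hx =>
      (mul_le_mul_of_nonneg_left (hfar x hx) hμ.le).trans (hc x ⟨ha'.trans hx.1, hx.2.trans hb'⟩)
    rwa [← mul_assoc, rpow_neg_inv_mul_rpow_neg_inv_add_one (by positivity) hr] at this
  have hE : ContinuousOn (fun x => Complex.exp (Complex.I * L * φ x)) (Icc a b) :=
    Complex.continuous_exp.comp_continuousOn
      (continuousOn_const.mul (Complex.continuous_ofReal.comp_continuousOn hφ))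
  calc ‖oscillatoryIntegral L φ a b‖ ≤ 2 * (C * δ) + 2 * δ :=
        norm_integral_le_of_bound_away_from hab hδ.le (by positivity)
          (hE.intervalIntegrable_of_Icc hab) (fun x _ => (norm_exp_I_mul_ofReal_mul L (φ x)).le)
          haway
    _ = (2 * C + 2) * δ := by ring

/-- `f j` stands for the `j`-th derivative of the phase `f 0`: unlike `iteratedDerivWithin`, such a
chain restricts to subintervals without change. -/
def VanDerCorputBound (m : ℕ) (C : ℝ) : Prop :=
  ∀ (f : ℕ → ℝ → ℝ) (a b L μ : ℝ), a ≤ b → 0 < L → 0 < μ →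
    (∀ j < m, ∀ x ∈ Icc a b, HasDerivWithinAt (f j) (f (j + 1) x) (Icc a b) x) →
    ContinuousOn (f m) (Icc a b) → (∀ x ∈ Icc a b, μ ≤ |f m x|) →
    ‖oscillatoryIntegral L (f 0) a b‖ ≤ C * (L * μ) ^ (-(1 / (m : ℝ)))

lemma vanDerCorputBound_two : VanDerCorputBound 2 10 := by
  intro f a b L μ hab hL hμ hf hcont hμf
  have hsign := (hcont.le_or_le_neg_of_le_abs isPreconnected_Icc hμ hμf).imp
    (fun h x hx => hμ.le.trans (h x hx)) (fun h x hx => (h x hx).trans (neg_nonpos.2 hμ.le))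
  have := norm_oscillatoryIntegral_le_of_le_abs_deriv_of_pieces (r := 1) hab hL hμ one_pos
    (by norm_num : (0 : ℝ) ≤ 4) (fun x hx => (hf 0 (by norm_num) x hx).continuousWithinAt)
    (hf 1 (by norm_num)) hcont hμf fun a' b' ν ha' hab' hb' hν hνf => by
      have hsub : Icc a' b' ⊆ Icc a b := Icc_subset_Icc ha' hb'
      rw [div_one, Real.rpow_neg_one, ← div_eq_mul_inv]
      exact norm_oscillatoryIntegral_le_of_le_abs_deriv hab'.le hL hν
        (fun x hx => (hf 0 (by norm_num) x (hsub hx)).mono hsub)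
        (fun x hx => (hf 1 (by norm_num) x (hsub hx)).mono hsub) (hcont.mono hsub)
        (hsign.imp (fun h x hx => h x (hsub hx)) (fun h x hx => h x (hsub hx))) hνf
  norm_num at this ⊢
  exact this

lemma VanDerCorputBound.succ {m : ℕ} (hm : 0 < m) {C : ℝ} (hC : 0 ≤ C)
    (h : VanDerCorputBound m C) : VanDerCorputBound (m + 1) (2 * C + 2) := by
  intro f a b L μ hab hL hμ hf hcont hμf
  have hfm := hf m m.lt_succ_self
  push_cast
  exact norm_oscillatoryIntegral_le_of_le_abs_deriv_of_pieces hab hL hμ (by positivity) hC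
    (fun x hx => (hf 0 (by omega) x hx).continuousWithinAt) hfm hcont hμf
    fun a' b' ν ha' hab' hb' hν hνf => by
      have hsub : Icc a' b' ⊆ Icc a b := Icc_subset_Icc ha' hb'
      exact h f a' b' L ν hab'.le hL hν
        (fun j hj x hx => (hf j (by omega) x (hsub hx)).mono hsub)
        (fun x hx => (hfm x (hsub hx)).continuousWithinAt.mono hsub) hνf

lemma exists_vanDerCorputBound {k : ℕ} (hk : 2 ≤ k) : ∃ C > 0, VanDerCorputBound k C := by
  induction k, hk using Nat.le_induction with
  | base => exact ⟨10, by norm_num, vanDerCorputBound_two⟩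
  | succ m hm ih =>
    obtain ⟨C, hC, hbound⟩ := ih
    exact ⟨2 * C + 2, by positivity, hbound.succ (by omega) hC.le⟩

lemma ContDiffOn.hasDerivWithinAt_iteratedDerivWithin {𝕜 F : Type*} [NontriviallyNormedField 𝕜]
    [NormedAddCommGroup F] [NormedSpace 𝕜 F] {f : 𝕜 → F} {s : Set 𝕜} {k j : ℕ}
    (hf : ContDiffOn 𝕜 k f s) (hs : UniqueDiffOn 𝕜 s) (hj : j < k) {x : 𝕜} (hx : x ∈ s) :
    HasDerivWithinAt (iteratedDerivWithin j f s) (iteratedDerivWithin (j + 1) f s x) s x := by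
  rw [iteratedDerivWithin_succ]
  exact (hf.differentiableOn_iteratedDerivWithin (mod_cast hj) hs x hx).hasDerivWithinAt

/-- The Van der Corput lemma: if the `k`-th derivative (`k ≥ 2`) of a real phase `ψ`
satisfies `|ψ^{(k)}| ≥ 1` on `[a, b]`, then the oscillatory integral
`∫_a^b e^{iλψ(ξ)} dξ` is bounded by `c_k λ^{-1/k}`, with `c_k` depending only on `k`. -/
theorem van_der_corput :
    ∀ k : ℕ, 2 ≤ k → ∃ c > 0, ∀ a b : ℝ, a < b → ∀ ψ : ℝ → ℝ,
      ContDiffOn ℝ k ψ (Icc a b) →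
      (∀ ξ ∈ Icc a b, 1 ≤ |iteratedDerivWithin k ψ (Icc a b) ξ|) →
      ∀ L : ℝ, 0 < L →
        ‖∫ ξ in a..b, Complex.exp (Complex.I * (L : ℂ) * ((ψ ξ : ℝ) : ℂ))‖ ≤
          c * L ^ (-(1 / (k : ℝ))) := by
  intro k hk
  obtain ⟨C, hC, hbound⟩ := exists_vanDerCorputBound hk
  refine ⟨C, hC, fun a b hab ψ hψ hψk L hL => ?_⟩
  have hs : UniqueDiffOn ℝ (Icc a b) := uniqueDiffOn_Icc hab
  simpa only [oscillatoryIntegral, mul_one, iteratedDerivWithin_zero] using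
    hbound (fun j => iteratedDerivWithin j ψ (Icc a b)) a b L 1 hab.le hL one_pos
    (fun j hj x hx => hψ.hasDerivWithinAt_iteratedDerivWithin hs hj hx)
    (hψ.continuousOn_iteratedDerivWithin le_rfl hs) hψk
end

section
/- There exists a constant C > 0 such that for every integer N ≥ 1, every family of complex coefficients (a_k)_{|k| ≤ N}, and every real t with 0 < |t| ≤ 1/N, one has sup_{x ∈ ℝ} |Σ_{|k| ≤ N} a_k e^{i(t k² + k x)}| ≤ C |t|^{-1/2} ∫_0^{2π} |Σ_{|k| ≤ N} a_k e^{i k x}| dx. -/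
/-!
Since `(2π)⁻¹ ∫₀^{2π} e^{i(j-k)y} dy = δ_{jk}`, the evolved polynomial is the convolution
`(2π)⁻¹ ∫₀^{2π} K_t(x - y) f(y) dy` of the data `f` with the kernel
`K_t(z) = ∑_{|k| ≤ N} e^{i(tk² + kz)}`, so it suffices to show `|K_t(z)| ≤ C |t|^{-1/2}`.

The phase differences `β_k = 2tk + t + z` of the kernel increase by `2t` per step and, as
`|t| N ≤ 1`, sweep an interval of length at most `4 < 2π`; hence they pass within `δ = √|t|` of
`2πℤ` at most once, on a block of at most `δ/|t| + 1 = O(|t|^{-1/2})` consecutive terms. On the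
two remaining blocks the Kuzmin–Landau inequality applies: summing by parts against
`(1 - e^{iβ_k})⁻¹ = 1/2 + (i/2) cot(β_k/2)`, whose imaginary part is monotone, bounds each block
by `O(cot(δ/2)) = O(|t|^{-1/2})`.
-/

open Real MeasureTheory Finset

namespace TorusDispersion

lemma cot_le_cot_of_le {a b : ℝ} (ha : 0 < a) (hab : a ≤ b) (hb : b < π) : cot b ≤ cot a := by
  have hcot : ∀ x, cot x = tan (π / 2 - x) := fun x => by
    rw [cot_eq_cos_div_sin, tan_eq_sin_div_cos, sin_pi_div_two_sub, cos_pi_div_two_sub]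
  rw [hcot, hcot]
  rcases hab.eq_or_lt with rfl | hab
  · rfl
  · exact (tan_lt_tan_of_lt_of_lt_pi_div_two (by linarith) (by linarith) (by linarith)).le

lemma cot_le_inv {x : ℝ} (h0 : 0 < x) (h1 : x < π / 2) : cot x ≤ x⁻¹ := by
  have hcos : 0 < cos x := cos_pos_of_mem_Ioo ⟨by linarith, h1⟩
  have h := lt_tan h0 h1
  rw [tan_eq_sin_div_cos, lt_div_iff₀ hcos] at h
  rw [cot_eq_cos_div_sin, div_le_iff₀ (sin_pos_of_pos_of_lt_pi h0 (by linarith)),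
    inv_mul_eq_div, le_div_iff₀ h0]
  linarith

lemma abs_cot_le_cot {δ θ : ℝ} (hδ : 0 < δ) (hδθ : δ ≤ θ) (hθδ : θ ≤ π - δ) :
    |cot θ| ≤ cot δ := by
  have h := cot_le_cot_of_le (a := θ) (b := π - δ) (by linarith) hθδ (by linarith)
  rw [cot_eq_cos_div_sin, cos_pi_sub, sin_pi_sub, neg_div, ← cot_eq_cos_div_sin] at h
  exact abs_le.2 ⟨h, cot_le_cot_of_le hδ hδθ (by linarith)⟩

lemma one_sub_exp_mul_half_add_cot_mul_I {θ : ℝ} (hθ : sin θ ≠ 0) :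
    (1 - Complex.exp ((2 * θ : ℝ) * Complex.I)) * (1 / 2 + (cot θ / 2 : ℝ) * Complex.I) = 1 := by
  have hs : Complex.sin θ ≠ 0 := by exact_mod_cast hθ
  have hexp : Complex.exp ((2 * θ : ℝ) * Complex.I) =
      (Complex.cos θ + Complex.sin θ * Complex.I) ^ 2 := by
    rw [← Complex.exp_mul_I, ← Complex.exp_nat_mul]; push_cast; ring_nf
  rw [hexp, cot_eq_cos_div_sin]
  push_cast
  field_simp
  linear_combination
    (Complex.sin θ - Complex.cos θ * Complex.I) * Complex.sin_sq_add_cos_sq (θ : ℂ)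
      - (Complex.cos θ * Complex.sin θ ^ 2 * Complex.I + 2 * Complex.cos θ ^ 2 * Complex.sin θ
        + Complex.sin θ ^ 3) * Complex.I_sq

lemma exp_mul_I_eq_mul_sub {a b θ : ℝ} (m : ℤ) (hθ : sin θ ≠ 0)
    (hab : b = a + 2 * θ + 2 * π * m) :
    Complex.exp (a * Complex.I) = (1 / 2 + (cot θ / 2 : ℝ) * Complex.I) *
      (Complex.exp (a * Complex.I) - Complex.exp (b * Complex.I)) := by
  have hb : Complex.exp (b * Complex.I) =
      Complex.exp (a * Complex.I) * Complex.exp ((2 * θ : ℝ) * Complex.I) := by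
    subst hab
    rw [← Complex.exp_add, show ((a + 2 * θ + 2 * π * m : ℝ) : ℂ) * Complex.I =
      (a * Complex.I + (2 * θ : ℝ) * Complex.I) + m * (2 * π * Complex.I) by push_cast; ring,
      Complex.exp_add _ (m * _), Complex.exp_int_mul_two_pi_mul_I, mul_one]
  rw [hb]
  linear_combination (-Complex.exp (a * Complex.I)) * one_sub_exp_mul_half_add_cot_mul_I hθ

lemma norm_half_add_mul_I_le (c : ℝ) :
    ‖1 / 2 + (c / 2 : ℝ) * Complex.I‖ ≤ (1 + |c|) / 2 := by
  refine (norm_add_le _ _).trans_eq ?_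
  rw [norm_mul, Complex.norm_I, mul_one, Complex.norm_real, norm_div, norm_div]
  norm_num
  ring

lemma norm_half_add_mul_I_sub (c d : ℝ) :
    ‖(1 / 2 + (c / 2 : ℝ) * Complex.I) - (1 / 2 + (d / 2 : ℝ) * Complex.I)‖ = |c - d| / 2 := by
  rw [show (1 / 2 + (c / 2 : ℝ) * Complex.I) - (1 / 2 + (d / 2 : ℝ) * Complex.I) =
    ((c - d) / 2 : ℝ) * Complex.I by push_cast; ring]
  rw [norm_mul, Complex.norm_I, mul_one, Complex.norm_real, Real.norm_eq_abs, abs_div,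
    abs_two]

lemma norm_sum_range_le_of_eq_mul_sub (e u : ℕ → ℂ) (n : ℕ) (he : ∀ k ≤ n, ‖e k‖ ≤ 1)
    (h : ∀ k < n, e k = u k * (e k - e (k + 1))) :
    ‖∑ k ∈ range n, e k‖ ≤ 2 * (‖u (n - 1)‖ + ∑ k ∈ range (n - 1), ‖u (k + 1) - u k‖) := by
  have hG : ∀ k ≤ n, ‖∑ j ∈ range k, (e j - e (j + 1))‖ ≤ 2 := fun k hk => by
    rw [sum_range_sub']
    exact (norm_sub_le _ _).trans (by linarith [he 0 (Nat.zero_le n), he k hk])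
  rw [sum_congr rfl fun k hk => h k (mem_range.1 hk)]
  have := sum_range_by_parts u (fun k => e k - e (k + 1)) n
  simp only [smul_eq_mul] at this
  rw [this]
  refine (norm_sub_le _ _).trans ?_
  rw [mul_add, mul_sum (range (n - 1))]
  gcongr
  · rw [norm_mul, mul_comm]; gcongr; exact hG n le_rfl
  · refine (norm_sum_le _ _).trans (sum_le_sum fun k hk => ?_)
    rw [norm_mul, mul_comm]; gcongr
    exact hG _ (by have := mem_range.1 hk; omega)

theorem norm_sum_exp_le_kuzmin_landau (f : ℕ → ℝ) {n : ℕ} {δ : ℝ} (m : ℤ) (hδ : 0 < δ)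
    (hδπ : δ ≤ π) (hmono : ∀ k, f (k + 1) - f k ≤ f (k + 2) - f (k + 1))
    (hwin : ∀ k, k + 1 < n →
      2 * π * m + δ ≤ f (k + 1) - f k ∧ f (k + 1) - f k ≤ 2 * π * m + 2 * π - δ) :
    ‖∑ k ∈ range n, Complex.exp (f k * Complex.I)‖ ≤ 2 + 3 * cot (δ / 2) := by
  have hcot : 0 ≤ cot (δ / 2) := by
    simpa [cot_eq_cos_div_sin] using cot_le_cot_of_le (b := π / 2) (by positivity) (by linarith)
      (by linarith [pi_pos])
  obtain _ | _ | n := n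
  · simp only [range_zero, sum_empty, norm_zero]; positivity
  · simp only [zero_add, range_one, sum_singleton, Complex.norm_exp_ofReal_mul_I]; linarith
  set θ : ℕ → ℝ := fun k => (f (k + 1) - f k) / 2 - π * m
  set u : ℕ → ℂ := fun k => 1 / 2 + (cot (θ k) / 2 : ℝ) * Complex.I
  have hθ : ∀ k ≤ n, δ / 2 ≤ θ k ∧ θ k ≤ π - δ / 2 := fun k hk => by
    have := hwin k (by omega)
    constructor <;> simp only [θ] <;> linarith
  have hcotθ : ∀ k ≤ n, |cot (θ k)| ≤ cot (δ / 2) := fun k hk =>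
    abs_cot_le_cot (by positivity) (hθ k hk).1 (hθ k hk).2
  have hvar : ∑ k ∈ range n, ‖u (k + 1) - u k‖ ≤ cot (δ / 2) := by
    have hstep : ∀ k ∈ range n, ‖u (k + 1) - u k‖ = (cot (θ k) - cot (θ (k + 1))) / 2 :=
      fun k hk => by
        have hk := mem_range.1 hk
        rw [norm_half_add_mul_I_sub, abs_of_nonpos, neg_sub]
        exact sub_nonpos.2 <| cot_le_cot_of_le (by linarith [hθ k hk.le])
          (by have := hmono k; simp only [θ]; linarith) (by linarith [hθ (k + 1) hk])
    rw [sum_congr rfl hstep, ← sum_div, sum_range_sub' (fun k => cot (θ k))]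
    linarith [abs_le.1 (hcotθ 0 (Nat.zero_le n)), abs_le.1 (hcotθ n le_rfl)]
  have habel := norm_sum_range_le_of_eq_mul_sub (fun k => Complex.exp (f k * Complex.I)) u (n + 1)
    (fun k _ => (Complex.norm_exp_ofReal_mul_I _).le) fun k hk =>
      exp_mul_I_eq_mul_sub m (sin_pos_of_pos_of_lt_pi (by linarith [hθ k (by omega)])
        (by linarith [hθ k (by omega)])).ne' (by simp only [θ]; ring)
  simp only [add_tsub_cancel_right] at habel
  rw [sum_range_succ]
  refine (norm_add_le _ _).trans ?_
  rw [Complex.norm_exp_ofReal_mul_I]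
  linarith [norm_half_add_mul_I_le (cot (θ n)), hcotθ n le_rfl]

lemma exists_split_of_monotone {α : Type*} [LinearOrder α] {β : ℕ → α} (hβ : Monotone β)
    (c : α) (n : ℕ) : ∃ p ≤ n, (∀ k < p, β k < c) ∧ ∀ k, p ≤ k → k < n → c ≤ β k := by
  have hex : ∃ p, n ≤ p ∨ c ≤ β p := ⟨n, Or.inl le_rfl⟩
  refine ⟨Nat.find hex, Nat.find_min' hex (Or.inl le_rfl), fun k hk => ?_, fun k hpk hkn => ?_⟩
  · exact lt_of_not_ge (not_or.1 (Nat.find_min hex hk)).2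
  · rcases Nat.find_spec hex with h | h
    · omega
    · exact h.trans (hβ hpk)

lemma card_Ico_le_div_add_one {β : ℕ → ℝ} {ε c ℓ : ℝ} (hε : 0 < ε) (hℓ : 0 ≤ ℓ)
    (hβ : ∀ k, β k + ε ≤ β (k + 1)) {p q : ℕ}
    (h : ∀ k, p ≤ k → k < q → c ≤ β k ∧ β k < c + ℓ) :
    ((Ico p q).card : ℝ) ≤ ℓ / ε + 1 := by
  rw [Nat.card_Ico]
  rcases le_or_gt q p with hqp | hpq
  · rw [Nat.sub_eq_zero_of_le hqp, Nat.cast_zero]; positivity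
  obtain ⟨j, rfl⟩ : ∃ j, q = p + j + 1 := ⟨q - p - 1, by omega⟩
  have hgrowth : ∀ i : ℕ, β p + ε * i ≤ β (p + i) := fun i => by
    induction i with
    | zero => simp
    | succ i ih => rw [← add_assoc]; push_cast; linarith [hβ (p + i)]
  have hp := (h p le_rfl (by omega)).1
  have hj := (h (p + j) (by omega) (by omega)).2
  have : (j : ℝ) ≤ ℓ / ε := by rw [le_div_iff₀ hε]; linarith [hgrowth j]
  rw [show p + j + 1 - p = j + 1 by omega, Nat.cast_succ]
  linarith

theorem norm_sum_Ico_exp_le_kuzmin_landau (f : ℕ → ℝ) {a b : ℕ} {δ : ℝ} (m : ℤ) (hδ : 0 < δ)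
    (hδπ : δ ≤ π) (hmono : ∀ k, f (k + 1) - f k ≤ f (k + 2) - f (k + 1))
    (hwin : ∀ k, a ≤ k → k + 1 < b →
      2 * π * m + δ ≤ f (k + 1) - f k ∧ f (k + 1) - f k ≤ 2 * π * m + 2 * π - δ) :
    ‖∑ k ∈ Ico a b, Complex.exp (f k * Complex.I)‖ ≤ 2 + 3 * cot (δ / 2) := by
  rw [sum_Ico_eq_sum_range]
  exact norm_sum_exp_le_kuzmin_landau (fun k => f (a + k)) m hδ hδπ (fun k => hmono (a + k))
    fun k hk => hwin (a + k) (by omega) (by omega)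

theorem norm_sum_exp_le_of_one_crossing (f : ℕ → ℝ) {n : ℕ} {δ ε : ℝ} (m : ℤ) (hδ : 0 < δ)
    (hδπ : δ ≤ π) (hε : 0 < ε) (hincr : ∀ k, f (k + 1) - f k + ε ≤ f (k + 2) - f (k + 1))
    (hwin : ∀ k, k + 1 < n →
      2 * π * (m - 1) + δ ≤ f (k + 1) - f k ∧ f (k + 1) - f k ≤ 2 * π * (m + 1) - δ) :
    ‖∑ k ∈ range n, Complex.exp (f k * Complex.I)‖ ≤
      2 * (2 + 3 * cot (δ / 2)) + 2 * δ / ε + 1 := by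
  have hmono : ∀ k, f (k + 1) - f k ≤ f (k + 2) - f (k + 1) := fun k => by
    linarith [hincr k]
  have hβmono : Monotone fun k => f (k + 1) - f k := monotone_nat_of_le_succ hmono
  -- The blocks `[0, p)`, `[p, q)`, `[q, n)` are where the differences lie below, within `δ` of,
  -- and above `2πm`.
  obtain ⟨p, hpn, hp_lt, hp_ge⟩ := exists_split_of_monotone hβmono (2 * π * m - δ) n
  obtain ⟨q, hqn, hq_lt, hq_ge⟩ := exists_split_of_monotone hβmono (2 * π * m + δ) n
  have hpq : p ≤ q := by
    by_contra! h
    linarith [hp_lt q h, hq_ge q le_rfl (by omega)]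
  have hleft := norm_sum_Ico_exp_le_kuzmin_landau f (m - 1) hδ hδπ hmono (a := 0) (b := p)
    fun k _ hk => by
      have := hwin k (by omega)
      have := hp_lt k (by omega)
      push_cast
      constructor <;> linarith
  have hright := norm_sum_Ico_exp_le_kuzmin_landau f m hδ hδπ hmono (a := q) (b := n)
    fun k hk hkn => by
      have := hwin k hkn
      have := hq_ge k hk (by omega)
      constructor <;> linarith
  have hmiddle : ‖∑ k ∈ Ico p q, Complex.exp (f k * Complex.I)‖ ≤ 2 * δ / ε + 1 := by
    refine (norm_sum_le _ _).trans ?_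
    simp only [Complex.norm_exp_ofReal_mul_I, sum_const, nsmul_eq_mul, mul_one]
    refine card_Ico_le_div_add_one (β := fun k => f (k + 1) - f k) (c := 2 * π * m - δ) hε
      (by positivity) hincr fun k hpk hkq => ⟨hp_ge k hpk (by omega), ?_⟩
    linarith [hq_lt k hkq]
  rw [range_eq_Ico, ← sum_Ico_consecutive _ (Nat.zero_le q) hqn,
    ← sum_Ico_consecutive _ (Nat.zero_le p) hpq]
  refine (norm_add_le _ _).trans ?_
  refine (add_le_add_left (norm_add_le _ _) _).trans ?_
  linarith

theorem norm_sum_exp_quadratic_le_of_pos {t : ℝ} (b : ℝ) {n : ℕ} (ht0 : 0 < t) (ht1 : t ≤ 1)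
    (htn : t * n ≤ 2) :
    ‖∑ k ∈ range (n + 1), Complex.exp ((t * k ^ 2 + b * k : ℝ) * Complex.I)‖ ≤ 18 / √t := by
  have hπ := pi_gt_three
  set δ := √t
  have hδ : 0 < δ := sqrt_pos.2 ht0
  have hδ1 : δ ≤ 1 := sqrt_le_one.2 ht1
  have hδt : t = δ ^ 2 := (sq_sqrt ht0.le).symm
  have hdiff : ∀ k : ℕ, (t * ((k + 1 : ℕ) : ℝ) ^ 2 + b * ((k + 1 : ℕ) : ℝ)) - (t * k ^ 2 + b * k)
      = 2 * t * k + t + b := fun k => by push_cast; ring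
  -- The differences `2tk + t + b`, `k < n`, lie in `[t + b, t + b + 4]`, which fits between
  -- `2π(m - 1) + δ` and `2π(m + 1) - δ` because `2δ + 4 ≤ 2π`.
  set m : ℤ := ⌊(t + b - δ) / (2 * π)⌋ + 1
  have hm : 2 * π * (m - 1) ≤ t + b - δ ∧ t + b - δ < 2 * π * m := by
    have h1 := Int.floor_le ((t + b - δ) / (2 * π))
    have h2 := Int.lt_floor_add_one ((t + b - δ) / (2 * π))
    rw [le_div_iff₀ (by positivity)] at h1
    rw [div_lt_iff₀ (by positivity)] at h2
    push_cast [m]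
    constructor <;> linarith
  refine (norm_sum_exp_le_of_one_crossing (fun k : ℕ => t * k ^ 2 + b * k) m hδ (by linarith)
    (ε := 2 * t) (by positivity) (fun k => ?_) (fun k hk => ?_)).trans ?_
  · rw [hdiff, show k + 2 = (k + 1) + 1 by rfl, hdiff]
    push_cast
    linarith
  · rw [hdiff]
    have hk : t * k ≤ 2 := le_trans (by gcongr; exact_mod_cast (by omega : k ≤ n)) htn
    constructor <;> nlinarith [hm.1, hm.2, Nat.cast_nonneg (α := ℝ) k]
  · have hcot : cot (δ / 2) ≤ 2 / δ := by
      simpa using cot_le_inv (x := δ / 2) (by positivity) (by linarith)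
    have hεδ : 2 * δ / (2 * t) = 1 / δ := by rw [hδt]; field_simp
    have h1 : 1 ≤ 1 / δ := one_le_one_div hδ hδ1
    rw [hεδ, show 18 / δ = 18 * (1 / δ) by ring]
    rw [show 2 / δ = 2 * (1 / δ) by ring] at hcot
    linarith

theorem norm_sum_exp_quadratic_le {t : ℝ} (b : ℝ) {n : ℕ} (ht : t ≠ 0) (ht1 : |t| ≤ 1)
    (htn : |t| * n ≤ 2) :
    ‖∑ k ∈ range (n + 1), Complex.exp ((t * k ^ 2 + b * k : ℝ) * Complex.I)‖ ≤ 18 / √|t| := by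
  rcases ht.lt_or_gt with hneg | hpos
  · rw [abs_of_neg hneg] at ht1 htn ⊢
    rw [← Complex.norm_conj, map_sum]
    convert norm_sum_exp_quadratic_le_of_pos (-b) (neg_pos.2 hneg) ht1 htn using 4 with k
    rw [← Complex.exp_conj, map_mul, Complex.conj_ofReal, Complex.conj_I]
    push_cast
    ring_nf
  · rw [abs_of_pos hpos] at ht1 htn ⊢
    exact norm_sum_exp_quadratic_le_of_pos b hpos ht1 htn

noncomputable def trigPoly (s : Finset ℤ) (c : ℤ → ℂ) (y : ℝ) : ℂ :=
  ∑ k ∈ s, c k * Complex.exp (Complex.I * (k : ℂ) * (y : ℂ))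

@[fun_prop]
theorem continuous_trigPoly (s : Finset ℤ) (c : ℤ → ℂ) : Continuous (trigPoly s c) := by
  unfold trigPoly
  fun_prop

theorem integral_exp_int_mul_I (n : ℤ) :
    ∫ y in (0 : ℝ)..(2 * π), Complex.exp (Complex.I * n * y) =
      if n = 0 then (2 * π : ℂ) else 0 := by
  split_ifs with hn
  · simp [hn]
  · have hc : Complex.I * n ≠ 0 := mul_ne_zero Complex.I_ne_zero (Int.cast_ne_zero.2 hn)
    rw [integral_exp_mul_complex hc,
      show Complex.I * n * ((2 * π : ℝ) : ℂ) = n * (2 * π * Complex.I) by push_cast; ring,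
      Complex.exp_int_mul_two_pi_mul_I]
    simp

theorem integral_trigPoly_sub_mul_trigPoly (s : Finset ℤ) (c a : ℤ → ℂ) (x : ℝ) :
    ∫ y in (0 : ℝ)..(2 * π), trigPoly s c (x - y) * trigPoly s a y =
      2 * π * trigPoly s (c * a) x := by
  have hexpand : ∀ y : ℝ, trigPoly s c (x - y) * trigPoly s a y = ∑ k ∈ s, ∑ j ∈ s,
      c k * a j * Complex.exp (Complex.I * k * x) * Complex.exp (Complex.I * (j - k : ℤ) * y) :=
    fun y => by
      rw [trigPoly, trigPoly, sum_mul_sum]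
      refine sum_congr rfl fun k _ => sum_congr rfl fun j _ => ?_
      rw [mul_mul_mul_comm, ← Complex.exp_add, mul_assoc (c k * a j), ← Complex.exp_add]
      congr 2
      push_cast
      ring
  simp_rw [hexpand]
  rw [intervalIntegral.integral_finsetSum fun k _ =>
    (by fun_prop : Continuous _).intervalIntegrable _ _]
  rw [trigPoly, mul_sum]
  refine sum_congr rfl fun k hk => ?_
  rw [intervalIntegral.integral_finsetSum fun j _ =>
    (by fun_prop : Continuous _).intervalIntegrable _ _]
  simp_rw [intervalIntegral.integral_const_mul, integral_exp_int_mul_I, sub_eq_zero, mul_ite,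
    mul_zero]
  rw [sum_ite_eq' s k, if_pos hk, Pi.mul_apply]
  ring

noncomputable def schrodingerKernel (s : Finset ℤ) (t : ℝ) : ℝ → ℂ :=
  trigPoly s fun k => Complex.exp (Complex.I * (t * k ^ 2 : ℝ))

theorem sum_exp_quadratic_eq_integral_schrodingerKernel (s : Finset ℤ) (a : ℤ → ℂ) (t x : ℝ) :
    ∑ k ∈ s, a k * Complex.exp (Complex.I * ((t * (k : ℝ) ^ 2 + (k : ℝ) * x : ℝ) : ℂ)) =
      (2 * π : ℂ)⁻¹ *
        ∫ y in (0 : ℝ)..(2 * π), schrodingerKernel s t (x - y) * trigPoly s a y := by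
  rw [schrodingerKernel, integral_trigPoly_sub_mul_trigPoly, ← mul_assoc,
    inv_mul_cancel₀ (by simp [pi_ne_zero]), one_mul, trigPoly]
  refine sum_congr rfl fun k _ => ?_
  rw [Pi.mul_apply, mul_comm (Complex.exp _) (a k), mul_assoc, ← Complex.exp_add]
  push_cast
  ring_nf

theorem norm_schrodingerKernel_le {N : ℕ} {t : ℝ} (ht : t ≠ 0) (ht1 : |t| ≤ 1)
    (htN : |t| * N ≤ 1) (z : ℝ) :
    ‖schrodingerKernel (Icc (-N : ℤ) N) t z‖ ≤ 18 / √|t| := by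
  have hreindex : schrodingerKernel (Icc (-N : ℤ) N) t z =
      (∑ j ∈ range (2 * N + 1),
          Complex.exp ((t * j ^ 2 + (z - 2 * t * N) * j : ℝ) * Complex.I)) *
        Complex.exp ((t * N ^ 2 - N * z : ℝ) * Complex.I) := by
    rw [schrodingerKernel, trigPoly, Int.Icc_eq_finset_map, sum_map, sum_mul,
      show (N + 1 - -N : ℤ).toNat = 2 * N + 1 by omega]
    refine sum_congr rfl fun j _ => ?_
    simp only [Function.Embedding.trans_apply, Nat.castEmbedding_apply, addLeftEmbedding_apply]
    rw [← Complex.exp_add, ← Complex.exp_add]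
    congr 1
    push_cast
    ring
  rw [hreindex, norm_mul, Complex.norm_exp_ofReal_mul_I, mul_one]
  exact norm_sum_exp_quadratic_le _ ht ht1 (by push_cast; linarith)

end TorusDispersion

open TorusDispersion in
/-- Dispersive estimate on the one-dimensional torus for short times `0 < |t| ≤ 1/N`:
the `L^∞` norm of the Schrödinger evolution of a trigonometric polynomial of degree `N`
is bounded by `C |t|^{-1/2}` times the `L¹(𝕋¹)` norm of the data. -/
theorem torus_short_time_dispersion :
    ∃ C > 0, ∀ N : ℕ, 1 ≤ N → ∀ a : ℤ → ℂ, ∀ t : ℝ, 0 < |t| → |t| ≤ 1 / N →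
      ∀ x : ℝ,
        ‖∑ k ∈ Finset.Icc (-(N : ℤ)) (N : ℤ),
            a k * Complex.exp (Complex.I * ((t * (k : ℝ) ^ 2 + (k : ℝ) * x : ℝ) : ℂ))‖ ≤
          C * |t| ^ (-(1 / 2 : ℝ)) *
            ∫ y in (0 : ℝ)..(2 * Real.pi),
              ‖∑ k ∈ Finset.Icc (-(N : ℤ)) (N : ℤ),
                  a k * Complex.exp (Complex.I * (k : ℂ) * (y : ℂ))‖ := by
  refine ⟨9 / π, by positivity, fun N hN a t ht htN x => ?_⟩
  have hN' : (1 : ℝ) ≤ N := by exact_mod_cast hN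
  have htN' : |t| * N ≤ 1 := by rwa [le_div_iff₀ (by positivity)] at htN
  have ht1 : |t| ≤ 1 := htN.trans (div_le_one_of_le₀ hN' (by positivity))
  set s := Icc (-N : ℤ) N
  have hconvolution :
      ‖∫ y in (0 : ℝ)..(2 * π), schrodingerKernel s t (x - y) * trigPoly s a y‖ ≤
        18 / √|t| * ∫ y in (0 : ℝ)..(2 * π), ‖trigPoly s a y‖ := by
    rw [← intervalIntegral.integral_const_mul]
    refine intervalIntegral.norm_integral_le_of_norm_le (by positivity)
      (ae_of_all _ fun y _ => ?_) ((by fun_prop : Continuous _).intervalIntegrable _ _)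
    rw [norm_mul]
    gcongr
    exact norm_schrodingerKernel_le (abs_pos.1 ht) ht1 htN' _
  rw [sum_exp_quadratic_eq_integral_schrodingerKernel, norm_mul, norm_inv, Complex.norm_mul,
    Complex.norm_ofNat, Complex.norm_real, Real.norm_of_nonneg pi_pos.le,
    rpow_neg (abs_nonneg t), ← sqrt_eq_rpow]
  calc (2 * π)⁻¹ * ‖∫ y in (0 : ℝ)..(2 * π), schrodingerKernel s t (x - y) * trigPoly s a y‖
      ≤ (2 * π)⁻¹ * (18 / √|t| * ∫ y in (0 : ℝ)..(2 * π), ‖trigPoly s a y‖) := by gcongr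
    _ = 9 / π * (√|t|)⁻¹ * ∫ y in (0 : ℝ)..(2 * π), ‖trigPoly s a y‖ := by ring
end

section
/- For every Schwartz function φ : ℝ → ℂ and every t ≠ 0, the solution u(t, x) := ∫_ℝ e^{-4π² i t ξ²} φ̂(ξ) e^{2πixξ} dξ of the free Schrödinger equation satisfies sup_{x ∈ ℝ} |u(t, x)| ≤ (4π|t|)^{-1/2} ∫_ℝ |φ(y)| dy. -/
/-!
The multiplier `e^{-4π²itξ²}` is not integrable, so we damp it to `e^{-bξ²}` with
`b = ε + 4π²it`, `ε > 0`. Then Fubini and the Fourier transform of a complex Gaussian write the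
integral as `∫ φ(y) (π/b)^{1/2} e^{-π²(x-y)²/b} dy`; since `Re (1/b) ≥ 0` the kernel is bounded by
`(π/|b|)^{1/2} ≤ (4π|t|)^{-1/2}`. As `φ̂` is integrable, dominated convergence lets `ε → 0`.
-/

open Real MeasureTheory SchwartzMap
open Complex Filter Topology
open scoped FourierTransform

theorem norm_cexp_neg_mul_sq_le_one {c : ℂ} (hc : 0 ≤ c.re) (ξ : ℝ) :
    ‖cexp (-c * ξ ^ 2)‖ ≤ 1 := by
  rw [norm_exp, Real.exp_le_one_iff, ← ofReal_pow, re_mul_ofReal, neg_re]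
  exact mul_nonpos_of_nonpos_of_nonneg (neg_nonpos.2 hc) (sq_nonneg ξ)

theorem Complex.norm_le_norm_ofReal_add {b : ℂ} (hb : 0 ≤ b.re) {ε : ℝ} (hε : 0 ≤ ε) :
    ‖b‖ ≤ ‖(ε : ℂ) + b‖ := by
  rw [← sq_le_sq₀ (norm_nonneg _) (norm_nonneg _), Complex.sq_norm, Complex.sq_norm,
    normSq_apply, normSq_apply]
  simp only [add_re, ofReal_re, add_im, ofReal_im, zero_add]
  nlinarith

theorem Real.fourier_eq_integral_mul_cexp (f : ℝ → ℂ) (ξ : ℝ) :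
    𝓕 f ξ = ∫ y : ℝ, f y * cexp (-2 * π * I * y * ξ) := by
  rw [Real.fourier_real_eq_integral_exp_smul]
  congr 1 with y
  rw [smul_eq_mul, mul_comm]
  push_cast
  ring_nf

theorem integrable_cexp_neg_mul_sq_mul_cexp {b : ℂ} (hb : 0 < b.re) (a : ℝ) :
    Integrable fun ξ : ℝ => cexp (-b * ξ ^ 2) * cexp (2 * π * I * a * ξ) := by
  simpa only [← Complex.exp_add, add_zero] using integrable_cexp_quadratic hb (2 * π * I * a) 0

theorem norm_integral_cexp_neg_mul_sq_mul_cexp_le {b : ℂ} (hb : 0 < b.re) (a : ℝ) :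
    ‖∫ ξ : ℝ, cexp (-b * ξ ^ 2) * cexp (2 * π * I * a * ξ)‖ ≤ (π / ‖b‖) ^ (1 / 2 : ℝ) := by
  have hgauss : ∫ ξ : ℝ, cexp (-b * ξ ^ 2) * cexp (2 * π * I * a * ξ) =
      (π / b) ^ (1 / 2 : ℂ) * cexp (-(π * a) ^ 2 / b) := by
    have hb0 : b ≠ 0 := by rintro rfl; simp at hb
    rw [show -(π * a : ℂ) ^ 2 / b = -(2 * π * a) ^ 2 / (4 * b) by field_simp; ring,
      ← fourierIntegral_gaussian hb]
    congr 1 with ξ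
    rw [mul_comm]
    ring_nf
  have hexp : ‖cexp (-(π * a : ℂ) ^ 2 / b)‖ ≤ 1 := by
    rw [norm_exp, Real.exp_le_one_iff, div_eq_mul_inv,
      show -(π * a : ℂ) ^ 2 = ((-(π * a) ^ 2 : ℝ) : ℂ) by push_cast; ring, re_ofReal_mul, inv_re]
    exact mul_nonpos_of_nonpos_of_nonneg (neg_nonpos.2 (sq_nonneg _))
      (div_nonneg hb.le (normSq_nonneg b))
  rw [hgauss, norm_mul, show (1 / 2 : ℂ) = ((1 / 2 : ℝ) : ℂ) by push_cast; ring, norm_cpow_real,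
    norm_div, norm_real, norm_of_nonneg pi_pos.le]
  calc _ ≤ (π / ‖b‖) ^ (1 / 2 : ℝ) * 1 := by gcongr
    _ = _ := mul_one _

theorem integral_cexp_neg_mul_sq_mul_fourier_mul_cexp {f : ℝ → ℂ} (hf : Integrable f) {b : ℂ}
    (hb : 0 < b.re) (x : ℝ) :
    ∫ ξ : ℝ, cexp (-b * ξ ^ 2) * 𝓕 f ξ * cexp (2 * π * I * x * ξ) =
      ∫ y : ℝ, f y * ∫ ξ : ℝ, cexp (-b * ξ ^ 2) * cexp (2 * π * I * (x - y) * ξ) := by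
  have hflip := VectorFourier.integral_fourierIntegral_smul_eq_flip (μ := volume) (ν := volume)
    (L := innerₗ ℝ) Real.continuous_fourierChar (by fun_prop) hf
    (integrable_cexp_neg_mul_sq_mul_cexp hb x)
  simp only [smul_eq_mul] at hflip
  calc _ = ∫ ξ : ℝ, 𝓕 f ξ * (cexp (-b * ξ ^ 2) * cexp (2 * π * I * x * ξ)) := by
        congr 1 with ξ; ring
    _ = _ := hflip
    _ = _ := by
      congr 1 with y
      congr 1
      simp only [VectorFourier.fourierIntegral, Circle.smul_def, Real.fourierChar_apply,
        LinearMap.flip_apply, innerₗ_apply_apply, RCLike.inner_apply, conj_trivial, smul_eq_mul]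
      congr 1 with ξ
      rw [mul_left_comm, ← Complex.exp_add, ← Complex.exp_add, ← Complex.exp_add]
      push_cast
      ring_nf

theorem norm_integral_cexp_neg_mul_sq_mul_fourier_mul_cexp_le_of_re_pos {f : ℝ → ℂ}
    (hf : Integrable f) {b : ℂ} (hb : 0 < b.re) (x : ℝ) :
    ‖∫ ξ : ℝ, cexp (-b * ξ ^ 2) * 𝓕 f ξ * cexp (2 * π * I * x * ξ)‖ ≤
      (π / ‖b‖) ^ (1 / 2 : ℝ) * ∫ y : ℝ, ‖f y‖ := by
  rw [integral_cexp_neg_mul_sq_mul_fourier_mul_cexp hf hb, ← integral_const_mul]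
  refine norm_integral_le_of_norm_le (hf.norm.const_mul _) (ae_of_all _ fun y => ?_)
  rw [norm_mul, mul_comm]
  gcongr
  exact_mod_cast norm_integral_cexp_neg_mul_sq_mul_cexp_le hb (x - y)

theorem tendsto_integral_cexp_neg_add_mul_sq_mul {g : ℝ → ℂ} (hg : Integrable g) {b : ℂ}
    (hb : 0 ≤ b.re) :
    Tendsto (fun ε : ℝ => ∫ ξ : ℝ, cexp (-(ε + b) * ξ ^ 2) * g ξ) (𝓝[>] 0)
      (𝓝 (∫ ξ : ℝ, cexp (-b * ξ ^ 2) * g ξ)) := by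
  refine tendsto_integral_filter_of_dominated_convergence (fun ξ => ‖g ξ‖)
    (Eventually.of_forall fun ε => ((by fun_prop : Continuous fun ξ : ℝ =>
      cexp (-(ε + b) * ξ ^ 2)).aestronglyMeasurable.mul hg.1))
    (eventually_nhdsWithin_of_forall fun ε (hε : 0 < ε) => ae_of_all _ fun ξ => ?_)
    hg.norm (ae_of_all _ fun ξ => ?_)
  · rw [norm_mul]
    refine mul_le_of_le_one_left (norm_nonneg _) (norm_cexp_neg_mul_sq_le_one ?_ ξ)
    simpa using add_nonneg hε.le hb
  · have hcont : Continuous fun ε : ℝ => cexp (-(ε + b) * ξ ^ 2) * g ξ := by fun_prop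
    simpa using (hcont.tendsto 0).mono_left nhdsWithin_le_nhds

theorem norm_integral_cexp_neg_mul_sq_mul_fourier_mul_cexp_le {f : ℝ → ℂ} (hf : Integrable f)
    (hf' : Integrable (𝓕 f)) {b : ℂ} (hb : 0 ≤ b.re) (hb0 : b ≠ 0) (x : ℝ) :
    ‖∫ ξ : ℝ, cexp (-b * ξ ^ 2) * 𝓕 f ξ * cexp (2 * π * I * x * ξ)‖ ≤
      (π / ‖b‖) ^ (1 / 2 : ℝ) * ∫ y : ℝ, ‖f y‖ := by
  have hg : Integrable fun ξ : ℝ => 𝓕 f ξ * cexp (2 * π * I * x * ξ) := by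
    simpa only [mul_comm (𝓕 f _)] using hf'.bdd_mul (c := 1) (by fun_prop)
      (ae_of_all _ fun ξ => by rw [norm_exp]; simp)
  simp_rw [mul_assoc] at hg ⊢
  refine le_of_tendsto (tendsto_integral_cexp_neg_add_mul_sq_mul hg hb).norm
    (eventually_nhdsWithin_of_forall fun ε (hε : 0 < ε) => ?_)
  have hεb : 0 < ((ε : ℂ) + b).re := by simpa using add_pos_of_pos_of_nonneg hε hb
  simp_rw [← mul_assoc]
  calc _ ≤ (π / ‖(ε : ℂ) + b‖) ^ (1 / 2 : ℝ) * ∫ y : ℝ, ‖f y‖ :=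
        norm_integral_cexp_neg_mul_sq_mul_fourier_mul_cexp_le_of_re_pos hf hεb x
    _ ≤ _ := by
        have : 0 < ‖b‖ := norm_pos_iff.2 hb0
        gcongr
        exact norm_le_norm_ofReal_add hb hε.le

/-- The dispersive estimate `‖S(t)φ‖_{L^∞(ℝ)} ≤ (4π|t|)^{-1/2} ‖φ‖_{L¹(ℝ)}` for the free
Schrödinger equation on the line. -/
theorem schrodinger_dispersive_estimate
    (φ : SchwartzMap ℝ ℂ) (t : ℝ) (ht : t ≠ 0) (x : ℝ) :
    ‖∫ ξ : ℝ,
        Complex.exp (-4 * (Real.pi : ℂ) ^ 2 * Complex.I * (t : ℂ) * (ξ : ℂ) ^ 2) *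
          (∫ y : ℝ, φ y * Complex.exp (-2 * (Real.pi : ℂ) * Complex.I * (y : ℂ) * (ξ : ℂ))) *
          Complex.exp (2 * (Real.pi : ℂ) * Complex.I * (x : ℂ) * (ξ : ℂ))‖ ≤
      (4 * Real.pi * |t|) ^ (-(1 / 2 : ℝ)) * ∫ y : ℝ, ‖φ y‖ := by
  have hφ' : Integrable (𝓕 (φ : ℝ → ℂ)) := by
    rw [← SchwartzMap.fourier_coe]
    exact (𝓕 φ).integrable
  set b : ℂ := ((4 * π ^ 2 * t : ℝ) : ℂ) * I
  have hb0 : b ≠ 0 := mul_ne_zero (ofReal_ne_zero.2 (by positivity)) I_ne_zero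
  have hnorm : (π / ‖b‖) ^ (1 / 2 : ℝ) = (4 * π * |t|) ^ (-(1 / 2 : ℝ)) := by
    rw [norm_mul, norm_I, mul_one, norm_real, Real.norm_eq_abs, abs_mul,
      abs_of_pos (by positivity : 0 < 4 * π ^ 2), Real.rpow_neg (by positivity),
      ← Real.inv_rpow (by positivity)]
    congr 1
    field_simp
  have hexponent (ξ : ℝ) : -4 * (π : ℂ) ^ 2 * I * t * ξ ^ 2 = -b * ξ ^ 2 := by
    push_cast [b]; ring
  simp_rw [hexponent, ← Real.fourier_eq_integral_mul_cexp, ← hnorm]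
  exact norm_integral_cexp_neg_mul_sq_mul_fourier_mul_cexp_le φ.integrable hφ'
    (by simp only [b, mul_I_re, ofReal_im, neg_zero, le_refl]) hb0 x
end
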